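/- arXiv:1601.06800 — 5 statements merged into one kernel-verified Lean document; each statement's English description precedes it below -/
import Mathlib

section
/- Suppose a random variable ζ satisfies E[|ζ|^ℓ] ≤ C^ℓ ℓ^{γℓ} for all ℓ ∈ ℕ, for some constants C > 0 and 0 < γ < 2/3. Then there exist constants C' > 0 and 2 < γ' < 3 depending only on C and γ such that E[e^{vζ}] ≤ exp(v E[ζ] + C'(v² + |v|^{γ'})) for all v ∈ ℝ. -/
/-!
Pick Hölder conjugate exponents `p ∈ (2, 3)` and `q ≤ 2` with `γ q < 1`. Expanding
`exp (|ζ|^q / q)` as a power series and bounding `E |ζ|^{qk} ≤ (C (2k)^γ)^{qk}` by Lyapunov's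
inequality, the growth `k^{γqk}` is beaten by `k!`, so `E exp (|ζ|^q / q) ≤ K` for a constant `K`
depending only on `C` and `γ`. Young's inequality `v ζ ≤ |v|^p / p + |ζ|^q / q` then gives
`E e^{vζ} ≤ e^{|v|^p / p} K`, which settles `|v| > 1`. For `|v| ≤ 1`, integrating
`e^t ≤ 1 + t + t² e^{|t|}` gives `E e^{vζ} ≤ 1 + v E ζ + v² E [ζ² e^{|ζ|}]`, and the last moment
is again controlled by `K`.
-/

open MeasureTheory Real Filter Topology Nat ENNReal

theorem Real.exp_le_one_add_add_sq_mul_exp_abs (t : ℝ) : exp t ≤ 1 + t + t ^ 2 * exp |t| := by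
  rcases le_or_gt |t| 1 with ht | ht
  · have h := (abs_le.1 (abs_exp_sub_one_sub_id_le ht)).2
    nlinarith [one_le_exp (abs_nonneg t), sq_nonneg t]
  · rcases le_or_gt t 0 with hneg | hpos
    · rw [abs_of_nonpos hneg] at ht ⊢
      nlinarith [exp_le_one_iff.2 hneg, one_le_exp (neg_nonneg.2 hneg)]
    · rw [abs_of_pos hpos] at ht ⊢
      nlinarith [exp_pos t, mul_lt_mul_of_pos_right (one_lt_pow₀ ht two_ne_zero) (exp_pos t)]

theorem Real.sq_mul_exp_le_two_mul_exp_two_mul {x : ℝ} (hx : 0 ≤ x) :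
    x ^ 2 * exp x ≤ 2 * exp (2 * x) := by
  have h := pow_div_factorial_le_exp x hx 2
  rw [two_mul x, exp_add]
  norm_num at h
  nlinarith [exp_pos x]

theorem summable_mul_rpow_pow_div_factorial (a : ℝ) {θ : ℝ} (hθ : θ < 1) :
    Summable fun k : ℕ => (a * (k : ℝ) ^ θ) ^ k / k ! := by
  have hlim : Tendsto (fun k : ℕ => |a| * exp 1 * (k : ℝ) ^ (θ - 1)) atTop (𝓝 0) := by
    simpa using ((tendsto_rpow_neg_atTop (by linarith : 0 < 1 - θ)).comp
      tendsto_natCast_atTop_atTop).const_mul (|a| * exp 1)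
  refine .of_norm_bounded_eventually_nat summable_geometric_two ?_
  filter_upwards [hlim.eventually (ge_mem_nhds (by norm_num : (0:ℝ) < 1 / 2)),
    eventually_ge_atTop 1] with k hsmall hk
  have hk0 : (0 : ℝ) < k := by exact_mod_cast hk
  have hstirling : (k : ℝ) ^ k ≤ exp 1 ^ k * k ! := by
    rw [← exp_nat_mul, mul_one, ← div_le_iff₀ (by positivity)]
    exact pow_div_factorial_le_exp _ hk0.le k
  calc ‖(a * (k : ℝ) ^ θ) ^ k / (k !)‖ = (|a| * (k : ℝ) ^ θ) ^ k / k ! := by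
        rw [Real.norm_eq_abs, abs_div, abs_pow, abs_mul, abs_of_pos (rpow_pos_of_pos hk0 _),
          Nat.abs_cast]
    _ ≤ (|a| * exp 1 * (k : ℝ) ^ (θ - 1)) ^ k := by
        have h1 : 1 ≤ exp 1 ^ k * k ! / (k : ℝ) ^ k := by
          rwa [one_le_div (by positivity)]
        rw [div_le_iff₀ (by positivity), rpow_sub_one hk0.ne']
        calc (|a| * (k : ℝ) ^ θ) ^ k ≤ (|a| * (k : ℝ) ^ θ) ^ k * (exp 1 ^ k * k ! / (k : ℝ) ^ k) :=
              le_mul_of_one_le_right (by positivity) h1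
          _ = _ := by rw [mul_div_assoc, mul_pow _ (_ / _), div_pow]; field_simp; ring
    _ ≤ (1 / 2) ^ k := by gcongr

theorem ofReal_exp_eq_tsum {x : ℝ} (hx : 0 ≤ x) :
    ENNReal.ofReal (exp x) = ∑' k : ℕ, ENNReal.ofReal (x ^ k / k !) := by
  rw [exp_eq_exp_ℝ, NormedSpace.exp_eq_tsum_div,
    ENNReal.ofReal_tsum_of_nonneg (fun k => by positivity) (summable_pow_div_factorial x)]

section

variable {Ω : Type*} [MeasurableSpace Ω] {P : Measure Ω}

theorem lintegral_enorm_rpow_le_of_exponent_le [IsProbabilityMeasure P] {E : Type*}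
    [NormedAddCommGroup E] {f : Ω → E} (hf : AEStronglyMeasurable f P) {s t : ℝ} {M : ℝ≥0∞}
    (hs : 0 < s) (hst : s ≤ t) (h : ∫⁻ ω, ‖f ω‖ₑ ^ t ∂P ≤ M ^ t) :
    ∫⁻ ω, ‖f ω‖ₑ ^ s ∂P ≤ M ^ s := by
  have ht : 0 < t := hs.trans_le hst
  have hnorm : eLpNorm' f s P ≤ M := by
    refine (eLpNorm'_le_eLpNorm'_of_exponent_le hs hst P hf).trans ?_
    calc eLpNorm' f t P ≤ (M ^ t) ^ (1 / t) := by
          rw [eLpNorm']; gcongr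
      _ = M := by rw [← ENNReal.rpow_mul, mul_one_div_cancel ht.ne', ENNReal.rpow_one]
  calc ∫⁻ ω, ‖f ω‖ₑ ^ s ∂P = eLpNorm' f s P ^ s := by
        rw [eLpNorm', ← ENNReal.rpow_mul, one_div_mul_cancel hs.ne', ENNReal.rpow_one]
    _ ≤ M ^ s := by gcongr

theorem lintegral_enorm_pow_le_of_integral_le {ζ : Ω → ℝ} {ℓ : ℕ} {B : ℝ}
    (hint : Integrable (fun ω => |ζ ω| ^ ℓ) P) (hmom : ∫ ω, |ζ ω| ^ ℓ ∂P ≤ B) :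
    ∫⁻ ω, ‖ζ ω‖ₑ ^ (ℓ : ℝ) ∂P ≤ ENNReal.ofReal B := by
  simp_rw [enorm_eq_ofReal_abs, ENNReal.rpow_natCast, ← ENNReal.ofReal_pow (abs_nonneg _)]
  rw [← ofReal_integral_eq_lintegral_ofReal hint (ae_of_all _ fun ω => by positivity)]
  exact ENNReal.ofReal_le_ofReal hmom

theorem lintegral_enorm_rpow_le_of_moment_growth [IsProbabilityMeasure P] {ζ : Ω → ℝ}
    (hζ : AEStronglyMeasurable ζ P) {C γ : ℝ} (hC : 0 ≤ C)
    (hint : ∀ ℓ : ℕ, 1 ≤ ℓ → Integrable (fun ω => |ζ ω| ^ ℓ) P)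
    (hmom : ∀ ℓ : ℕ, 1 ≤ ℓ → ∫ ω, |ζ ω| ^ ℓ ∂P ≤ C ^ ℓ * (ℓ : ℝ) ^ (γ * ℓ))
    {s : ℝ} {n : ℕ} (hs : 0 < s) (hn : 1 ≤ n) (hsn : s ≤ n) :
    ∫⁻ ω, ‖ζ ω‖ₑ ^ s ∂P ≤ ENNReal.ofReal (C * (n : ℝ) ^ γ) ^ s := by
  refine lintegral_enorm_rpow_le_of_exponent_le hζ hs hsn ?_
  rw [ENNReal.ofReal_rpow_of_nonneg (by positivity) (by positivity), Real.rpow_natCast, mul_pow,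
    ← rpow_mul_natCast (Nat.cast_nonneg n)]
  exact lintegral_enorm_pow_le_of_integral_le (hint n hn) (hmom n hn)

theorem lintegral_ofReal_pow_div_factorial_le [IsProbabilityMeasure P] {ζ : Ω → ℝ}
    (hζ : AEStronglyMeasurable ζ P) {C γ q : ℝ} (hC : 0 ≤ C) (hq : 0 < q) (hq2 : q ≤ 2)
    (hint : ∀ ℓ : ℕ, 1 ≤ ℓ → Integrable (fun ω => |ζ ω| ^ ℓ) P)
    (hmom : ∀ ℓ : ℕ, 1 ≤ ℓ → ∫ ω, |ζ ω| ^ ℓ ∂P ≤ C ^ ℓ * (ℓ : ℝ) ^ (γ * ℓ)) (k : ℕ) :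
    ∫⁻ ω, ENNReal.ofReal ((|ζ ω| ^ q / q) ^ k / k !) ∂P ≤
      ENNReal.ofReal ((C ^ q * 2 ^ (γ * q) / q * (k : ℝ) ^ (γ * q)) ^ k / k !) := by
  rcases Nat.eq_zero_or_pos k with rfl | hk
  · simp
  have hM : 0 ≤ C * ((2 * k : ℕ) : ℝ) ^ γ := by positivity
  have hpt : ∀ ω, ENNReal.ofReal ((|ζ ω| ^ q / q) ^ k / k !)
      = ‖ζ ω‖ₑ ^ (q * k) * ENNReal.ofReal (1 / (q ^ k * k !)) := by
    intro ω
    rw [enorm_eq_ofReal_abs, ENNReal.ofReal_rpow_of_nonneg (abs_nonneg _) (by positivity),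
      ← ENNReal.ofReal_mul (by positivity), rpow_mul_natCast (abs_nonneg _), div_pow]
    field_simp
  have hpow : (C * ((2 * k : ℕ) : ℝ) ^ γ) ^ q = C ^ q * 2 ^ (γ * q) * (k : ℝ) ^ (γ * q) := by
    rw [Nat.cast_mul, Nat.cast_two, mul_rpow hC (by positivity), ← rpow_mul (by positivity),
      mul_rpow zero_le_two (by positivity), mul_assoc]
  calc ∫⁻ ω, ENNReal.ofReal ((|ζ ω| ^ q / q) ^ k / k !) ∂P
      = (∫⁻ ω, ‖ζ ω‖ₑ ^ (q * k) ∂P) * ENNReal.ofReal (1 / (q ^ k * k !)) := by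
        simp_rw [hpt]; exact lintegral_mul_const' _ _ ENNReal.ofReal_ne_top
    _ ≤ ENNReal.ofReal (C * ((2 * k : ℕ) : ℝ) ^ γ) ^ (q * k)
          * ENNReal.ofReal (1 / (q ^ k * k !)) := by
        gcongr
        exact lintegral_enorm_rpow_le_of_moment_growth hζ hC hint hmom (by positivity)
          (by omega) (by push_cast; gcongr)
    _ = ENNReal.ofReal ((C ^ q * 2 ^ (γ * q) / q * (k : ℝ) ^ (γ * q)) ^ k / k !) := by
        rw [ENNReal.ofReal_rpow_of_nonneg hM (by positivity), ← ENNReal.ofReal_mul (by positivity),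
          rpow_mul_natCast hM, hpow]
        congr 1
        simp only [div_mul_eq_mul_div, mul_pow, div_pow]
        field_simp

theorem lintegral_exp_abs_rpow_div_le [IsProbabilityMeasure P] {ζ : Ω → ℝ} (hζ : Measurable ζ)
    {C γ q : ℝ} (hC : 0 ≤ C) (hq : 0 < q) (hq2 : q ≤ 2) (hγq : γ * q < 1)
    (hint : ∀ ℓ : ℕ, 1 ≤ ℓ → Integrable (fun ω => |ζ ω| ^ ℓ) P)
    (hmom : ∀ ℓ : ℕ, 1 ≤ ℓ → ∫ ω, |ζ ω| ^ ℓ ∂P ≤ C ^ ℓ * (ℓ : ℝ) ^ (γ * ℓ)) :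
    ∫⁻ ω, ENNReal.ofReal (exp (|ζ ω| ^ q / q)) ∂P ≤
      ENNReal.ofReal (∑' k : ℕ, (C ^ q * 2 ^ (γ * q) / q * (k : ℝ) ^ (γ * q)) ^ k / k !) := by
  calc ∫⁻ ω, ENNReal.ofReal (exp (|ζ ω| ^ q / q)) ∂P
      = ∑' k : ℕ, ∫⁻ ω, ENNReal.ofReal ((|ζ ω| ^ q / q) ^ k / k !) ∂P := by
        simp_rw [ofReal_exp_eq_tsum (by positivity : 0 ≤ |ζ _| ^ q / q)]
        exact lintegral_tsum fun k => by fun_prop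
    _ ≤ ∑' k : ℕ, ENNReal.ofReal ((C ^ q * 2 ^ (γ * q) / q * (k : ℝ) ^ (γ * q)) ^ k / k !) :=
        ENNReal.tsum_le_tsum <| lintegral_ofReal_pow_div_factorial_le hζ.aestronglyMeasurable hC hq
          hq2 hint hmom
    _ = ENNReal.ofReal (∑' k : ℕ, (C ^ q * 2 ^ (γ * q) / q * (k : ℝ) ^ (γ * q)) ^ k / k !) :=
        (ENNReal.ofReal_tsum_of_nonneg (fun k => by positivity)
          (summable_mul_rpow_pow_div_factorial _ hγq)).symm

theorem lintegral_exp_mul_abs_le {ζ : Ω → ℝ} {p q K : ℝ} (hpq : p.HolderConjugate q)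
    (hK : ∫⁻ ω, ENNReal.ofReal (exp (|ζ ω| ^ q / q)) ∂P ≤ ENNReal.ofReal K) {a : ℝ} (ha : 0 ≤ a) :
    ∫⁻ ω, ENNReal.ofReal (exp (a * |ζ ω|)) ∂P ≤ ENNReal.ofReal (exp (a ^ p / p) * K) := by
  calc ∫⁻ ω, ENNReal.ofReal (exp (a * |ζ ω|)) ∂P
      ≤ ∫⁻ ω, ENNReal.ofReal (exp (a ^ p / p)) * ENNReal.ofReal (exp (|ζ ω| ^ q / q)) ∂P := by
        refine lintegral_mono fun ω => ?_
        rw [← ENNReal.ofReal_mul (exp_pos _).le, ← exp_add]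
        exact ENNReal.ofReal_le_ofReal
          (exp_le_exp.2 (young_inequality_of_nonneg ha (abs_nonneg _) hpq))
    _ = ENNReal.ofReal (exp (a ^ p / p)) * ∫⁻ ω, ENNReal.ofReal (exp (|ζ ω| ^ q / q)) ∂P :=
        lintegral_const_mul' _ _ ENNReal.ofReal_ne_top
    _ ≤ ENNReal.ofReal (exp (a ^ p / p) * K) := by
        rw [ENNReal.ofReal_mul (exp_pos _).le]
        gcongr

theorem lintegral_sq_mul_exp_abs_le {ζ : Ω → ℝ} {p q K : ℝ} (hpq : p.HolderConjugate q)
    (hK : ∫⁻ ω, ENNReal.ofReal (exp (|ζ ω| ^ q / q)) ∂P ≤ ENNReal.ofReal K) :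
    ∫⁻ ω, ENNReal.ofReal (ζ ω ^ 2 * exp |ζ ω|) ∂P ≤ ENNReal.ofReal (2 * exp (2 ^ p / p) * K) := by
  calc ∫⁻ ω, ENNReal.ofReal (ζ ω ^ 2 * exp |ζ ω|) ∂P
      ≤ ∫⁻ ω, ENNReal.ofReal 2 * ENNReal.ofReal (exp (2 * |ζ ω|)) ∂P := by
        refine lintegral_mono fun ω => ?_
        rw [← ENNReal.ofReal_mul zero_le_two, ← sq_abs]
        exact ENNReal.ofReal_le_ofReal (sq_mul_exp_le_two_mul_exp_two_mul (abs_nonneg _))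
    _ = ENNReal.ofReal 2 * ∫⁻ ω, ENNReal.ofReal (exp (2 * |ζ ω|)) ∂P :=
        lintegral_const_mul' _ _ ENNReal.ofReal_ne_top
    _ ≤ ENNReal.ofReal 2 * ENNReal.ofReal (exp (2 ^ p / p) * K) := by
        gcongr; exact lintegral_exp_mul_abs_le hpq hK zero_le_two
    _ = ENNReal.ofReal (2 * exp (2 ^ p / p) * K) := by
        rw [← ENNReal.ofReal_mul zero_le_two, mul_assoc]

theorem lintegral_exp_mul_le_of_abs_le_one [IsProbabilityMeasure P] {ζ : Ω → ℝ}
    (hζ : Integrable ζ P) {R : ℝ} (hR0 : 0 ≤ R)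
    (hR : ∫⁻ ω, ENNReal.ofReal (ζ ω ^ 2 * exp |ζ ω|) ∂P ≤ ENNReal.ofReal R) {v : ℝ}
    (hv : |v| ≤ 1) :
    ∫⁻ ω, ENNReal.ofReal (exp (v * ζ ω)) ∂P ≤
      ENNReal.ofReal (exp (v * ∫ ω, ζ ω ∂P + R * v ^ 2)) := by
  have hζm := hζ.aestronglyMeasurable
  have hg : Integrable (fun ω => ζ ω ^ 2 * exp |ζ ω|) P :=
    (lintegral_ofReal_ne_top_iff_integrable (by fun_prop) (ae_of_all _ fun ω => by positivity)).1
      (ne_top_of_le_ne_top ENNReal.ofReal_ne_top hR)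
  have hgR : ∫ ω, ζ ω ^ 2 * exp |ζ ω| ∂P ≤ R := by
    rwa [← ENNReal.ofReal_le_ofReal_iff hR0,
      ofReal_integral_eq_lintegral_ofReal hg (ae_of_all _ fun ω => by positivity)]
  have hpt : ∀ ω, exp (v * ζ ω) ≤ 1 + v * ζ ω + v ^ 2 * (ζ ω ^ 2 * exp |ζ ω|) := by
    intro ω
    have hvζ : |v * ζ ω| ≤ |ζ ω| := by
      rw [abs_mul]; exact mul_le_of_le_one_left (abs_nonneg _) hv
    calc exp (v * ζ ω) ≤ 1 + v * ζ ω + (v * ζ ω) ^ 2 * exp |v * ζ ω| :=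
          exp_le_one_add_add_sq_mul_exp_abs _
      _ ≤ 1 + v * ζ ω + v ^ 2 * (ζ ω ^ 2 * exp |ζ ω|) := by
          rw [mul_pow, mul_assoc]; gcongr
  have hlin : Integrable (fun ω => 1 + v * ζ ω) P := (integrable_const 1).add (hζ.const_mul v)
  have hbound : Integrable (fun ω => 1 + v * ζ ω + v ^ 2 * (ζ ω ^ 2 * exp |ζ ω|)) P :=
    hlin.add (hg.const_mul _)
  calc ∫⁻ ω, ENNReal.ofReal (exp (v * ζ ω)) ∂P
      ≤ ∫⁻ ω, ENNReal.ofReal (1 + v * ζ ω + v ^ 2 * (ζ ω ^ 2 * exp |ζ ω|)) ∂P :=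
        lintegral_mono fun ω => ENNReal.ofReal_le_ofReal (hpt ω)
    _ = ENNReal.ofReal (∫ ω, 1 + v * ζ ω + v ^ 2 * (ζ ω ^ 2 * exp |ζ ω|) ∂P) :=
        (ofReal_integral_eq_lintegral_ofReal hbound
          (ae_of_all _ fun ω => (exp_pos _).le.trans (hpt ω))).symm
    _ ≤ ENNReal.ofReal (exp (v * ∫ ω, ζ ω ∂P + R * v ^ 2)) := by
        refine ENNReal.ofReal_le_ofReal ?_
        rw [integral_add hlin (hg.const_mul _),
          integral_add (integrable_const 1) (hζ.const_mul v), integral_const_mul,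
          integral_const_mul]
        have hquad := mul_le_mul_of_nonneg_left hgR (sq_nonneg v)
        have hexp := add_one_le_exp (v * ∫ ω, ζ ω ∂P + R * v ^ 2)
        simp only [integral_const, probReal_univ, smul_eq_mul, one_mul]
        linarith

theorem lintegral_exp_mul_le_of_lintegral_exp_rpow_le [IsProbabilityMeasure P] {ζ : Ω → ℝ}
    (hζ : Integrable ζ P) {m p q K : ℝ} (hm : |∫ ω, ζ ω ∂P| ≤ m) (hpq : p.HolderConjugate q)
    (hK0 : 0 ≤ K) (hK : ∫⁻ ω, ENNReal.ofReal (exp (|ζ ω| ^ q / q)) ∂P ≤ ENNReal.ofReal K)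
    (v : ℝ) :
    ∫⁻ ω, ENNReal.ofReal (exp (v * ζ ω)) ∂P ≤ ENNReal.ofReal
      (exp (v * ∫ ω, ζ ω ∂P + (2 * exp (2 ^ p / p) * K + m + K + 1) * (v ^ 2 + |v| ^ p))) := by
  have hm0 : 0 ≤ m := (abs_nonneg _).trans hm
  have hR0 : 0 ≤ 2 * exp (2 ^ p / p) * K := by positivity
  have hvp : 0 ≤ |v| ^ p := by positivity
  rcases le_or_gt |v| 1 with hv | hv
  · have hR := lintegral_sq_mul_exp_abs_le hpq hK
    refine (lintegral_exp_mul_le_of_abs_le_one hζ hR0 hR hv).trans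
      (ENNReal.ofReal_le_ofReal (exp_le_exp.2 ?_))
    nlinarith [sq_nonneg v]
  · have hmean : -(m * v ^ 2) ≤ v * ∫ ω, ζ ω ∂P := by
      have : |v * ∫ ω, ζ ω ∂P| ≤ m * v ^ 2 := by
        rw [abs_mul, ← sq_abs v, sq, mul_comm m]
        exact mul_le_mul (le_mul_of_one_le_left (abs_nonneg v) hv.le) hm (abs_nonneg _)
          (by positivity)
      linarith [neg_abs_le (v * ∫ ω, ζ ω ∂P)]
    have hp1 : |v| ^ p / p ≤ |v| ^ p := div_le_self hvp hpq.lt.le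
    have hvp1 : 1 ≤ |v| ^ p := one_le_rpow hv.le hpq.nonneg
    calc ∫⁻ ω, ENNReal.ofReal (exp (v * ζ ω)) ∂P
        ≤ ∫⁻ ω, ENNReal.ofReal (exp (|v| * |ζ ω|)) ∂P := by
          refine lintegral_mono fun ω => ENNReal.ofReal_le_ofReal (exp_le_exp.2 ?_)
          rw [← abs_mul]; exact le_abs_self _
      _ ≤ ENNReal.ofReal (exp (|v| ^ p / p) * K) := lintegral_exp_mul_abs_le hpq hK (abs_nonneg v)
      _ ≤ ENNReal.ofReal (exp (|v| ^ p / p + K)) := by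
          rw [exp_add]; gcongr; linarith [add_one_le_exp K]
      _ ≤ _ := by
          refine ENNReal.ofReal_le_ofReal (exp_le_exp.2 ?_)
          nlinarith [mul_le_mul_of_nonneg_left hvp1 hK0, sq_nonneg v]

end

theorem exists_holderConjugate_of_lt_two_thirds {γ : ℝ} (hγ0 : 0 < γ) (hγ : γ < 2 / 3) :
    ∃ p q : ℝ, p.HolderConjugate q ∧ 2 < p ∧ p < 3 ∧ q ≤ 2 ∧ γ * q < 1 := by
  -- `q = 2 - 3γ/4` works: `γ q = 2γ - 3γ²/4` increases on `[0, 2/3]` and equals `1` at `2/3`.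
  have h43 : 0 < 4 - 3 * γ := by linarith
  refine ⟨(8 - 3 * γ) / (4 - 3 * γ), (8 - 3 * γ) / 4, ?_, ?_, ?_, ?_, ?_⟩
  · rw [holderConjugate_iff_eq_conjExponent (by rw [lt_div_iff₀ h43]; linarith)]
    field_simp
    ring
  · rw [lt_div_iff₀ h43]; linarith
  · rw [div_lt_iff₀ h43]; linarith
  · linarith
  · nlinarith

/-- If a random variable `ζ` satisfies `E[|ζ|^ℓ] ≤ C^ℓ ℓ^{γℓ}` for all `ℓ ∈ ℕ` with
`C > 0` and `0 < γ < 2/3`, then there are constants `C' > 0` and `2 < γ' < 3`,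
depending only on `C` and `γ`, such that
`E[e^{vζ}] ≤ exp (v E[ζ] + C' (v² + |v|^{γ'}))` for all real `v`. -/
theorem mgf_bound_of_moment_growth (C γ : ℝ) (hC : 0 < C) (hγ0 : 0 < γ) (hγ : γ < 2 / 3) :
    ∃ C' γ' : ℝ, 0 < C' ∧ 2 < γ' ∧ γ' < 3 ∧
      ∀ {Ω : Type} [MeasurableSpace Ω] (P : Measure Ω), IsProbabilityMeasure P →
        ∀ ζ : Ω → ℝ, Measurable ζ → Integrable ζ P →
          (∀ ℓ : ℕ, 1 ≤ ℓ → Integrable (fun ω => |ζ ω| ^ ℓ) P) →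
          (∀ ℓ : ℕ, 1 ≤ ℓ → ∫ ω, |ζ ω| ^ ℓ ∂P ≤ C ^ ℓ * (ℓ : ℝ) ^ (γ * ℓ)) →
          ∀ v : ℝ,
            ∫⁻ ω, ENNReal.ofReal (Real.exp (v * ζ ω)) ∂P ≤
              ENNReal.ofReal (Real.exp (v * (∫ ω, ζ ω ∂P) + C' * (v ^ 2 + |v| ^ γ'))) := by
  obtain ⟨p, q, hpq, hp2, hp3, hq2, hγq⟩ := exists_holderConjugate_of_lt_two_thirds hγ0 hγ
  have hq0 : 0 < q := hpq.symm.pos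
  set K := ∑' k : ℕ, (C ^ q * 2 ^ (γ * q) / q * (k : ℝ) ^ (γ * q)) ^ k / (k ! : ℝ)
  have hK0 : 0 ≤ K := tsum_nonneg fun k => by positivity
  have hR0 : 0 ≤ 2 * exp (2 ^ p / p) * K := mul_nonneg (by positivity) hK0
  refine ⟨2 * exp (2 ^ p / p) * K + C + K + 1, p, by linarith, hp2, hp3, ?_⟩
  intro Ω _ P _ ζ hζ hζint hint hmom v
  have hmean : |∫ ω, ζ ω ∂P| ≤ C :=
    abs_integral_le_integral_abs.trans (by simpa using hmom 1 le_rfl)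
  exact lintegral_exp_mul_le_of_lintegral_exp_rpow_le hζint hmean hpq hK0
    (lintegral_exp_abs_rpow_div_le hζ hC.le hq0 hq2 hγq hint hmom) v
end

section
/- Suppose a random variable ζ satisfies E[ζ] = 0 and E[|ζ|^ℓ] ≤ C^ℓ ℓ^{γℓ} for all ℓ ∈ ℕ, for some constants C > 0 and 0 < γ < 2/3. Then there exist constants C' > 0 and 2 < γ' < 3 depending only on C and γ such that E[|1 + vζ|^ℓ] ≤ exp(C'(v²ℓ² + |v|^{γ'}ℓ^{γ'})) for all v ∈ ℝ and ℓ ∈ ℕ. -/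
open MeasureTheory

lemma aux_abs_pow (x : ℝ) (ℓ : ℕ) : |1 + x| ^ ℓ ≤ (1 + x) ^ ℓ + 2 * x ^ (2 * ℓ) := by
  have hx2 : (0:ℝ) ≤ x ^ (2 * ℓ) := by
    rw [mul_comm, pow_mul]; positivity
  rcases le_or_gt (-1) x with h | h
  · rw [abs_of_nonneg (by linarith)]; linarith
  · have h1 : |1 + x| ≤ |x| := by
      rw [abs_of_neg (by linarith), abs_of_neg (by linarith)]; linarith
    have h2 : (1:ℝ) ≤ |x| := by rw [abs_of_neg (by linarith)]; linarith
    have h3 : |1 + x| ^ ℓ ≤ x ^ (2 * ℓ) := by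
      calc |1 + x| ^ ℓ ≤ |x| ^ ℓ := pow_le_pow_left₀ (abs_nonneg _) h1 ℓ
        _ ≤ |x| ^ (2 * ℓ) := pow_le_pow_right₀ h2 (by omega)
        _ = x ^ (2 * ℓ) := by
            rw [← abs_pow]
            exact abs_of_nonneg hx2
    have h4 : -(x ^ (2*ℓ)) ≤ (1 + x) ^ ℓ := by
      have h5 := neg_abs_le ((1 + x) ^ ℓ)
      rw [abs_pow] at h5
      linarith
    linarith

lemma aux_pow_le_fact (k : ℕ) : (k : ℝ) ^ k ≤ (k.factorial : ℝ) * Real.exp 1 ^ k := by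
  have h := Real.sum_le_exp_of_nonneg (x := (k:ℝ)) (by positivity) (k + 1)
  have h2 : (k:ℝ) ^ k / (k.factorial : ℝ) ≤ Real.exp k := by
    refine le_trans ?_ h
    refine Finset.single_le_sum (f := fun i => (k:ℝ)^i / (i.factorial:ℝ)) ?_ ?_
    · intro i _; positivity
    · simp
  rw [div_le_iff₀ (by positivity)] at h2
  rw [Real.exp_one_pow]
  linarith [h2]

lemma aux_rpow_le_exp {x τ : ℝ} (hx : 0 ≤ x) (hτ0 : 0 ≤ τ) (hτ1 : τ ≤ 1) :
    x ^ τ ≤ Real.exp x := by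
  rcases le_or_gt x 1 with h | h
  · exact (Real.rpow_le_one hx h hτ0).trans (Real.one_le_exp hx)
  · calc x ^ τ ≤ x ^ (1:ℝ) := Real.rpow_le_rpow_of_exponent_le h.le hτ1
      _ = x := Real.rpow_one x
      _ ≤ Real.exp x := by linarith [Real.add_one_le_exp x]

lemma aux_bk {γ₁ : ℝ} (h0 : 0 ≤ γ₁) (h1 : γ₁ < 1) (w : ℝ) (hw : 0 ≤ w) (k : ℕ) (hk : 1 ≤ k) :
    (w * (k:ℝ) ^ (γ₁ - 1)) ^ k ≤ Real.exp (2 * (2*w) ^ (1 - γ₁)⁻¹) * (1/2:ℝ) ^ k := by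
  set τ : ℝ := 1 - γ₁ with hτ
  have hτ0 : 0 < τ := by simp [hτ]; linarith
  have hτ1 : τ ≤ 1 := by simp [hτ]; linarith
  set γ' : ℝ := τ⁻¹ with hγ'
  have hγ'0 : 0 < γ' := by positivity
  have hγ'τ : γ' * τ = 1 := inv_mul_cancel₀ hτ0.ne'
  set u : ℝ := w ^ γ' with hu
  set U : ℝ := (2*w) ^ γ' with hU
  have hu0 : 0 ≤ u := Real.rpow_nonneg hw _
  have hU0 : 0 ≤ U := Real.rpow_nonneg (by linarith) _
  have hk0 : (0:ℝ) < (k:ℝ) := by exact_mod_cast hk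
  have hid : w * (k:ℝ) ^ (γ₁ - 1) = (u / (k:ℝ)) ^ τ := by
    rw [Real.div_rpow hu0 hk0.le, hu, ← Real.rpow_mul hw, hγ'τ, Real.rpow_one]
    rw [show γ₁ - 1 = -τ by rw [hτ]; ring, Real.rpow_neg hk0.le]
    ring
  have huU : u ≤ U := Real.rpow_le_rpow hw (by linarith) hγ'0.le
  have hexp1 : Real.exp (-1) ≤ 1/2 := by
    rw [Real.exp_neg]
    have h2 : (2:ℝ) ≤ Real.exp 1 := by linarith [Real.add_one_le_exp 1]
    rw [inv_le_comm₀ (Real.exp_pos 1) (by norm_num)]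
    linarith
  rcases le_or_gt (k:ℝ) U with hcase | hcase
  · have hbase : w * (k:ℝ) ^ (γ₁ - 1) ≤ Real.exp (u / k) :=
      hid ▸ aux_rpow_le_exp (by positivity) hτ0.le hτ1
    have hbase0 : 0 ≤ w * (k:ℝ) ^ (γ₁ - 1) := by positivity
    calc (w * (k:ℝ) ^ (γ₁ - 1)) ^ k ≤ (Real.exp (u / k)) ^ k :=
          pow_le_pow_left₀ hbase0 hbase k
      _ = Real.exp ((k:ℕ) * (u / k)) := (Real.exp_nat_mul _ k).symm
      _ = Real.exp u := by rw [mul_div_cancel₀]; exact hk0.ne'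
      _ ≤ Real.exp (2 * U) * Real.exp (-1) ^ k := by
          rw [← Real.exp_nat_mul, ← Real.exp_add]
          apply Real.exp_le_exp.2
          have h6 : (k:ℝ) * (-1) = -(k:ℝ) := by ring
          rw [h6]
          linarith
      _ ≤ Real.exp (2 * U) * (1/2) ^ k := by
          apply mul_le_mul_of_nonneg_left _ (Real.exp_pos _).le
          exact pow_le_pow_left₀ (Real.exp_pos _).le hexp1 k
  · rcases eq_or_lt_of_le hw with hw0 | hw0
    · rw [← hw0, zero_mul, zero_pow (by omega)]
      positivity
    have hbase : w * (k:ℝ) ^ (γ₁ - 1) ≤ 1/2 := by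
      rw [hid]
      have hU0' : 0 < U := Real.rpow_pos_of_pos (by linarith) _
      have h2 : u / (k:ℝ) ≤ u / U := by
        apply div_le_div_of_nonneg_left hu0 hU0' hcase.le |>.trans_eq rfl
      have h3 : u / U = (1/2:ℝ) ^ γ' := by
        rw [hu, hU, ← Real.div_rpow hw (by linarith)]
        congr 1
        rw [div_eq_iff (by linarith : (2*w) ≠ 0)]
        ring
      have h4 : (u / (k:ℝ)) ^ τ ≤ (u / U) ^ τ :=
        Real.rpow_le_rpow (by positivity) h2 hτ0.le
      rw [h3, ← Real.rpow_mul (by norm_num), hγ'τ, Real.rpow_one] at h4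
      exact h4
    calc (w * (k:ℝ) ^ (γ₁ - 1)) ^ k ≤ (1/2:ℝ) ^ k :=
          pow_le_pow_left₀ (by positivity) hbase k
      _ ≤ Real.exp (2 * U) * (1/2) ^ k := by
          nlinarith [Real.one_le_exp (by positivity : (0:ℝ) ≤ 2 * U),
            pow_pos (show (0:ℝ) < 1/2 by norm_num) k]

lemma aux_binom {γ₁ : ℝ} (ℓ k : ℕ) (hk : 1 ≤ k) :
    (ℓ.choose k : ℝ) * (k:ℝ) ^ (γ₁ * k) ≤ (Real.exp 1 * ℓ * (k:ℝ) ^ (γ₁ - 1)) ^ k := by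
  have hK0 : (0:ℝ) < (k:ℝ) := by exact_mod_cast hk
  set E := Real.exp 1 with hE
  set Q : ℝ := (k:ℝ) ^ (γ₁ - 1) with hQ
  have hQ0 : 0 ≤ Q := Real.rpow_nonneg hK0.le _
  have key : (k:ℝ) ^ (γ₁ * k) = Q ^ k * (k:ℝ) ^ k := by
    rw [hQ, ← Real.rpow_natCast ((k:ℝ) ^ (γ₁ - 1)) k, ← Real.rpow_mul hK0.le,
      ← Real.rpow_natCast (k:ℝ) k, ← Real.rpow_add hK0]
    ring_nf
  have hch : (ℓ.choose k : ℝ) ≤ (ℓ:ℝ) ^ k / (k.factorial : ℝ) := by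
    exact_mod_cast Nat.choose_le_pow_div k ℓ
  have h3 : (ℓ.choose k : ℝ) * (k:ℝ) ^ k ≤ (ℓ:ℝ) ^ k * E ^ k := by
    calc (ℓ.choose k : ℝ) * (k:ℝ) ^ k ≤ ((ℓ:ℝ) ^ k / (k.factorial : ℝ)) * (k:ℝ) ^ k := by
          apply mul_le_mul_of_nonneg_right hch (by positivity)
      _ ≤ ((ℓ:ℝ) ^ k / (k.factorial : ℝ)) * ((k.factorial : ℝ) * E ^ k) := by
          apply mul_le_mul_of_nonneg_left (aux_pow_le_fact k) (by positivity)
      _ = (ℓ:ℝ) ^ k * E ^ k := by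
          field_simp
  calc (ℓ.choose k : ℝ) * (k:ℝ) ^ (γ₁ * k) = ((ℓ.choose k : ℝ) * (k:ℝ) ^ k) * Q ^ k := by
        rw [key]; ring
    _ ≤ ((ℓ:ℝ) ^ k * E ^ k) * Q ^ k := by
        apply mul_le_mul_of_nonneg_right h3 (by positivity)
    _ = (E * ℓ * Q) ^ k := by rw [mul_pow, mul_pow]; ring

lemma aux_geom {r : ℝ} (h0 : 0 ≤ r) (h1 : r ≤ 1/2) (n : ℕ) :
    ∑ k ∈ Finset.Ico 2 n, r ^ k ≤ 2 * r ^ 2 := by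
  have hgs : ∀ m : ℕ, ∑ i ∈ Finset.range m, r ^ i ≤ 2 := by
    intro m
    have hmul := geom_sum_mul r m
    have hrm : 0 ≤ r ^ m := by positivity
    have hsum : (0:ℝ) ≤ ∑ i ∈ Finset.range m, r ^ i :=
      Finset.sum_nonneg fun i _ => by positivity
    nlinarith
  rcases le_or_gt n 2 with h | h
  · rw [Finset.Ico_eq_empty (by omega)]
    simp; positivity
  · rw [Finset.sum_Ico_eq_sum_range]
    have h7 : ∀ i ∈ Finset.range (n - 2), r ^ (2 + i) = r^2 * r^i := fun i _ => pow_add r 2 i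
    rw [Finset.sum_congr rfl h7, ← Finset.mul_sum]
    have := hgs (n - 2)
    nlinarith [sq_nonneg r]

set_option maxHeartbeats 2000000 in
/-- If a centered random variable `ζ` satisfies `E[|ζ|^ℓ] ≤ C^ℓ ℓ^{γℓ}` for all `ℓ ∈ ℕ`
with `C > 0` and `0 < γ < 2/3`, then there are constants `C' > 0` and `2 < γ' < 3`,
depending only on `C` and `γ`, such that
`E[|1 + vζ|^ℓ] ≤ exp (C' (v²ℓ² + |v|^{γ'} ℓ^{γ'}))` for all `v ∈ ℝ` and `ℓ ∈ ℕ`. -/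
theorem moment_bound_of_centered_moment_growth (C γ : ℝ) (hC : 0 < C) (hγ0 : 0 < γ)
    (hγ : γ < 2 / 3) :
    ∃ C' γ' : ℝ, 0 < C' ∧ 2 < γ' ∧ γ' < 3 ∧
      ∀ {Ω : Type} [MeasurableSpace Ω] (P : Measure Ω), IsProbabilityMeasure P →
        ∀ ζ : Ω → ℝ, Measurable ζ → Integrable ζ P → (∫ ω, ζ ω ∂P) = 0 →
          (∀ ℓ : ℕ, 1 ≤ ℓ → Integrable (fun ω => |ζ ω| ^ ℓ) P) →
          (∀ ℓ : ℕ, 1 ≤ ℓ → ∫ ω, |ζ ω| ^ ℓ ∂P ≤ C ^ ℓ * (ℓ : ℝ) ^ (γ * ℓ)) →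
          ∀ (v : ℝ) (ℓ : ℕ), 1 ≤ ℓ →
            ∫⁻ ω, ENNReal.ofReal (|1 + v * ζ ω| ^ ℓ) ∂P ≤
              ENNReal.ofReal
                (Real.exp (C' * (v ^ 2 * (ℓ : ℝ) ^ 2 + |v| ^ γ' * (ℓ : ℝ) ^ γ'))) := by
  set γ₁ : ℝ := max γ (3/5) with hγ₁def
  have hγ₁a : 3/5 ≤ γ₁ := le_max_right _ _
  have hγ₁γ : γ ≤ γ₁ := le_max_left _ _
  have hγ₁b : γ₁ < 2/3 := max_lt hγ (by norm_num)
  have hτ0 : 0 < 1 - γ₁ := by linarith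
  set γ' : ℝ := (1 - γ₁)⁻¹ with hγ'def
  have hγ'0 : 0 < γ' := by positivity
  have hγ'id : (1 - γ₁) * γ' = 1 := mul_inv_cancel₀ hτ0.ne'
  have h2γ' : 2 < γ' := by
    by_contra h
    push_neg at h
    have h1 : (1:ℝ) ≤ (1 - γ₁) * 2 := by
      calc (1:ℝ) = (1 - γ₁) * γ' := hγ'id.symm
        _ ≤ (1 - γ₁) * 2 := mul_le_mul_of_nonneg_left h hτ0.le
    linarith
  have hγ'3 : γ' < 3 := by
    by_contra h
    push_neg at h
    have h1 : (1 - γ₁) * 3 ≤ 1 := by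
      calc (1 - γ₁) * 3 ≤ (1 - γ₁) * γ' := mul_le_mul_of_nonneg_left h hτ0.le
        _ = 1 := hγ'id
    linarith
  set A : ℝ := Real.exp 1 * C with hA
  have hexp2 : (2:ℝ) ≤ Real.exp 1 := by linarith [Real.add_one_le_exp 1]
  have hA0 : 0 < A := by positivity
  have hA2 : 2 * C ≤ A := by rw [hA]; exact mul_le_mul_of_nonneg_right hexp2 hC.le
  set C' : ℝ := 4*(A+1)^2 + 33*(A+1)^3 with hC'
  refine ⟨C', γ', by positivity, h2γ', hγ'3, ?_⟩
  intro Ω _ P hP ζ hζm hζi hζ0 hInt hMom v ℓ hℓ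
  set m : ℝ := |v| with hm
  have hm0 : 0 ≤ m := abs_nonneg v
  set w : ℝ := A * m * ℓ with hw
  have hℓ1 : (1:ℝ) ≤ (ℓ:ℝ) := by exact_mod_cast hℓ
  have hw0 : 0 ≤ w := by positivity
  have hX0 : 0 ≤ m ^ γ' * (ℓ:ℝ) ^ γ' :=
    mul_nonneg (Real.rpow_nonneg hm0 _) (Real.rpow_nonneg (by linarith) _)
  -- integrability of powers
  have hIk : ∀ k : ℕ, Integrable (fun ω => (ζ ω) ^ k) P := by
    intro k
    rcases Nat.eq_zero_or_pos k with h | h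
    · subst h; simpa using integrable_const (1:ℝ)
    · have h1 := hInt k h
      have h2 : (fun ω => |ζ ω| ^ k) = fun ω => ‖(ζ ω) ^ k‖ := by
        funext ω; rw [Real.norm_eq_abs, abs_pow]
      rw [h2] at h1
      exact (integrable_norm_iff ((hζm.pow_const k).aestronglyMeasurable)).1 h1
  -- absolute moment bounds with γ₁
  have hMabs : ∀ k : ℕ, 1 ≤ k → |∫ ω, (ζ ω) ^ k ∂P| ≤ C ^ k * (k:ℝ) ^ (γ₁ * k) := by
    intro k hk
    have hk1 : (1:ℝ) ≤ (k:ℝ) := by exact_mod_cast hk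
    have h1 : |∫ ω, (ζ ω) ^ k ∂P| ≤ ∫ ω, |ζ ω| ^ k ∂P := by
      calc |∫ ω, (ζ ω) ^ k ∂P| = ‖∫ ω, (ζ ω) ^ k ∂P‖ := (Real.norm_eq_abs _).symm
        _ ≤ ∫ ω, ‖(ζ ω) ^ k‖ ∂P := norm_integral_le_integral_norm _
        _ = ∫ ω, |ζ ω| ^ k ∂P := by simp [Real.norm_eq_abs, abs_pow]
    have h2 := hMom k hk
    have h3 : C ^ k * (k:ℝ) ^ (γ * k) ≤ C ^ k * (k:ℝ) ^ (γ₁ * k) := by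
      apply mul_le_mul_of_nonneg_left _ (by positivity)
      apply Real.rpow_le_rpow_of_exponent_le hk1
      have : (0:ℝ) ≤ (k:ℝ) := by positivity
      nlinarith
    linarith
  -- pointwise bound and integrability of the majorant
  have hgpt : ∀ ω, |1 + v * ζ ω| ^ ℓ ≤ (1 + v * ζ ω) ^ ℓ + 2 * (v * ζ ω) ^ (2*ℓ) :=
    fun ω => aux_abs_pow _ ℓ
  have hgnn : ∀ ω, 0 ≤ (1 + v * ζ ω) ^ ℓ + 2 * (v * ζ ω) ^ (2*ℓ) :=
    fun ω => le_trans (by positivity) (hgpt ω)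
  have hexpand : (fun ω => (1 + v * ζ ω) ^ ℓ) =
      fun ω => ∑ k ∈ Finset.range (ℓ+1), (ℓ.choose k : ℝ) * v ^ k * (ζ ω) ^ k := by
    funext ω
    rw [add_comm (1:ℝ), add_pow]
    refine Finset.sum_congr rfl fun k _ => ?_
    rw [mul_pow]; ring
  have hIg1 : Integrable (fun ω => (1 + v * ζ ω) ^ ℓ) P := by
    rw [hexpand]
    exact integrable_finset_sum _ fun k _ => (hIk k).const_mul _
  have hexpand2 : (fun ω => 2 * (v * ζ ω) ^ (2*ℓ)) =
      fun ω => (2 * v ^ (2*ℓ)) * (ζ ω) ^ (2*ℓ) := by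
    funext ω; rw [mul_pow]; ring
  have hIg2 : Integrable (fun ω => 2 * (v * ζ ω) ^ (2*ℓ)) P := by
    rw [hexpand2]; exact (hIk _).const_mul _
  have hIg : Integrable (fun ω => (1 + v * ζ ω) ^ ℓ + 2 * (v * ζ ω) ^ (2*ℓ)) P :=
    hIg1.add hIg2
  -- compute the integral of the majorant
  have e1 : ∫ ω, (1 + v * ζ ω) ^ ℓ ∂P =
      ∑ k ∈ Finset.range (ℓ+1), (ℓ.choose k : ℝ) * v ^ k * ∫ ω, (ζ ω) ^ k ∂P := by
    rw [hexpand, integral_finset_sum _ fun k _ => (hIk k).const_mul _]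
    exact Finset.sum_congr rfl fun k _ => integral_const_mul _ _
  have e2 : ∫ ω, 2 * (v * ζ ω) ^ (2*ℓ) ∂P = (2 * v ^ (2*ℓ)) * ∫ ω, (ζ ω) ^ (2*ℓ) ∂P := by
    rw [hexpand2]; exact integral_const_mul _ _
  have e0 : ∫ ω, ((1 + v * ζ ω) ^ ℓ + 2 * (v * ζ ω) ^ (2*ℓ)) ∂P =
      (∑ k ∈ Finset.range (ℓ+1), (ℓ.choose k : ℝ) * v ^ k * ∫ ω, (ζ ω) ^ k ∂P)
        + (2 * v ^ (2*ℓ)) * ∫ ω, (ζ ω) ^ (2*ℓ) ∂P := by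
    rw [integral_add hIg1 hIg2, e1, e2]
  -- split off first two terms of the sum
  have hsum_split : ∑ k ∈ Finset.range (ℓ+1), (ℓ.choose k : ℝ) * v ^ k * ∫ ω, (ζ ω) ^ k ∂P
      = 1 + ∑ k ∈ Finset.Ico 2 (ℓ+1), (ℓ.choose k : ℝ) * v ^ k * ∫ ω, (ζ ω) ^ k ∂P := by
    rw [Finset.range_eq_Ico, ← Finset.sum_Ico_consecutive _ (by omega : 0 ≤ 2) (by omega : 2 ≤ ℓ+1)]
    congr 1
    have h02 : Finset.Ico 0 2 = {0, 1} := by decide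
    rw [h02, Finset.sum_insert (by decide), Finset.sum_singleton]
    have hz0 : ∫ ω, (ζ ω) ^ 0 ∂P = 1 := by simp
    have hz1 : ∫ ω, (ζ ω) ^ 1 ∂P = 0 := by simpa using hζ0
    rw [hz0, hz1]
    simp
  -- bound the Ico sum termwise by b k
  have hterm : ∀ k ∈ Finset.Ico 2 (ℓ+1),
      (ℓ.choose k : ℝ) * v ^ k * ∫ ω, (ζ ω) ^ k ∂P ≤ (w * (k:ℝ) ^ (γ₁ - 1)) ^ k := by
    intro k hkmem
    have hk : 1 ≤ k := by
      have := (Finset.mem_Ico.1 hkmem).1; omega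
    have h1 : (ℓ.choose k : ℝ) * v ^ k * ∫ ω, (ζ ω) ^ k ∂P ≤
        (ℓ.choose k : ℝ) * (m ^ k * (C ^ k * (k:ℝ) ^ (γ₁ * k))) := by
      have hs1 : v ^ k * ∫ ω, (ζ ω) ^ k ∂P ≤ m ^ k * (C ^ k * (k:ℝ) ^ (γ₁ * k)) := by
        calc v ^ k * ∫ ω, (ζ ω) ^ k ∂P ≤ |v ^ k * ∫ ω, (ζ ω) ^ k ∂P| := le_abs_self _
          _ = m ^ k * |∫ ω, (ζ ω) ^ k ∂P| := by rw [abs_mul, abs_pow]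
          _ ≤ m ^ k * (C ^ k * (k:ℝ) ^ (γ₁ * k)) := by
              apply mul_le_mul_of_nonneg_left (hMabs k hk) (by positivity)
      calc (ℓ.choose k : ℝ) * v ^ k * ∫ ω, (ζ ω) ^ k ∂P
          = (ℓ.choose k : ℝ) * (v ^ k * ∫ ω, (ζ ω) ^ k ∂P) := by ring
        _ ≤ (ℓ.choose k : ℝ) * (m ^ k * (C ^ k * (k:ℝ) ^ (γ₁ * k))) := by
            apply mul_le_mul_of_nonneg_left hs1 (by positivity)
    have h2 : (ℓ.choose k : ℝ) * (m ^ k * (C ^ k * (k:ℝ) ^ (γ₁ * k)))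
        = (C * m) ^ k * ((ℓ.choose k : ℝ) * (k:ℝ) ^ (γ₁ * k)) := by
      rw [mul_pow]; ring
    have h3 : (C * m) ^ k * ((ℓ.choose k : ℝ) * (k:ℝ) ^ (γ₁ * k)) ≤
        (C * m) ^ k * (Real.exp 1 * ℓ * (k:ℝ) ^ (γ₁ - 1)) ^ k := by
      apply mul_le_mul_of_nonneg_left (aux_binom ℓ k hk) (by positivity)
    have h4 : (C * m) ^ k * (Real.exp 1 * ℓ * (k:ℝ) ^ (γ₁ - 1)) ^ k
        = (w * (k:ℝ) ^ (γ₁ - 1)) ^ k := by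
      rw [← mul_pow, hw, hA]
      congr 1
      ring
    linarith [h1, h2 ▸ h3, h4 ▸ h3]
  have hSsum : ∑ k ∈ Finset.Ico 2 (ℓ+1), (ℓ.choose k : ℝ) * v ^ k * ∫ ω, (ζ ω) ^ k ∂P
      ≤ ∑ k ∈ Finset.Ico 2 (ℓ+1), (w * (k:ℝ) ^ (γ₁ - 1)) ^ k :=
    Finset.sum_le_sum hterm
  -- bound the last term
  have hlast : (2 * v ^ (2*ℓ)) * ∫ ω, (ζ ω) ^ (2*ℓ) ∂P ≤
      2 * (w * ((2*ℓ:ℕ):ℝ) ^ (γ₁ - 1)) ^ (2*ℓ) := by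
    have h2ℓ : 1 ≤ 2*ℓ := by omega
    have hveven : v ^ (2*ℓ) = m ^ (2*ℓ) := by
      rw [pow_mul, pow_mul, hm, sq_abs]
    have hze : ∫ ω, (ζ ω) ^ (2*ℓ) ∂P ≤ C ^ (2*ℓ) * ((2*ℓ:ℕ):ℝ) ^ (γ₁ * ((2*ℓ:ℕ):ℝ)) :=
      le_trans (le_abs_self _) (hMabs (2*ℓ) h2ℓ)
    have h1 : (2 * v ^ (2*ℓ)) * ∫ ω, (ζ ω) ^ (2*ℓ) ∂P ≤
        2 * (m ^ (2*ℓ) * (C ^ (2*ℓ) * ((2*ℓ:ℕ):ℝ) ^ (γ₁ * ((2*ℓ:ℕ):ℝ)))) := by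
      rw [hveven]
      have hnn : 0 ≤ 2 * m ^ (2*ℓ) := by positivity
      calc (2 * m ^ (2*ℓ)) * ∫ ω, (ζ ω) ^ (2*ℓ) ∂P
          ≤ (2 * m ^ (2*ℓ)) * (C ^ (2*ℓ) * ((2*ℓ:ℕ):ℝ) ^ (γ₁ * ((2*ℓ:ℕ):ℝ))) :=
            mul_le_mul_of_nonneg_left hze hnn
        _ = 2 * (m ^ (2*ℓ) * (C ^ (2*ℓ) * ((2*ℓ:ℕ):ℝ) ^ (γ₁ * ((2*ℓ:ℕ):ℝ)))) := by ring
    have hpos2ℓ : (0:ℝ) < ((2*ℓ:ℕ):ℝ) := by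
      have : (0:ℕ) < 2*ℓ := by omega
      exact_mod_cast this
    have h2 : m ^ (2*ℓ) * (C ^ (2*ℓ) * ((2*ℓ:ℕ):ℝ) ^ (γ₁ * ((2*ℓ:ℕ):ℝ)))
        = (C * m * ((2*ℓ:ℕ):ℝ) ^ γ₁) ^ (2*ℓ) := by
      have hpow : ((2*ℓ:ℕ):ℝ) ^ (γ₁ * ((2*ℓ:ℕ):ℝ)) = (((2*ℓ:ℕ):ℝ) ^ γ₁) ^ (2*ℓ) := by
        rw [← Real.rpow_natCast ((((2*ℓ:ℕ):ℝ)) ^ γ₁) (2*ℓ), ← Real.rpow_mul hpos2ℓ.le]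
      rw [hpow, mul_pow, mul_pow]
      ring
    have h3 : (C * m * ((2*ℓ:ℕ):ℝ) ^ γ₁) ^ (2*ℓ) ≤ (w * ((2*ℓ:ℕ):ℝ) ^ (γ₁-1)) ^ (2*ℓ) := by
      apply pow_le_pow_left₀ (by positivity)
      have hb : ((2*ℓ:ℕ):ℝ) ^ γ₁ = ((2*ℓ:ℕ):ℝ) ^ (γ₁-1) * ((2*ℓ:ℕ):ℝ) := by
        rw [← Real.rpow_add_one hpos2ℓ.ne']
        ring_nf
      have hrnn : 0 ≤ ((2*ℓ:ℕ):ℝ) ^ (γ₁-1) := Real.rpow_nonneg hpos2ℓ.le _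
      have hcast : ((2*ℓ:ℕ):ℝ) = 2 * (ℓ:ℝ) := by push_cast; ring
      have key2 : C * m * (((2*ℓ:ℕ):ℝ) ^ (γ₁-1) * ((2*ℓ:ℕ):ℝ))
          = (2*C) * (m * (ℓ:ℝ) * ((2*ℓ:ℕ):ℝ) ^ (γ₁-1)) := by
        rw [hcast]; ring
      have key3 : w * ((2*ℓ:ℕ):ℝ) ^ (γ₁-1) = A * (m * (ℓ:ℝ) * ((2*ℓ:ℕ):ℝ) ^ (γ₁-1)) := by
        rw [hw]; ring
      rw [hb, key2, key3]
      apply mul_le_mul_of_nonneg_right hA2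
      exact mul_nonneg (mul_nonneg hm0 (by linarith)) hrnn
    calc (2 * v ^ (2*ℓ)) * ∫ ω, (ζ ω) ^ (2*ℓ) ∂P
        ≤ 2 * (m ^ (2*ℓ) * (C ^ (2*ℓ) * ((2*ℓ:ℕ):ℝ) ^ (γ₁ * ((2*ℓ:ℕ):ℝ)))) := h1
      _ = 2 * (C * m * ((2*ℓ:ℕ):ℝ) ^ γ₁) ^ (2*ℓ) := by rw [h2]
      _ ≤ 2 * (w * ((2*ℓ:ℕ):ℝ) ^ (γ₁-1)) ^ (2*ℓ) := by linarith
  -- combine: integral of majorant ≤ 1 + S + last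
  have hIg_bound : ∫ ω, ((1 + v * ζ ω) ^ ℓ + 2 * (v * ζ ω) ^ (2*ℓ)) ∂P ≤
      1 + (∑ k ∈ Finset.Ico 2 (ℓ+1), (w * (k:ℝ) ^ (γ₁ - 1)) ^ k)
        + 2 * (w * ((2*ℓ:ℕ):ℝ) ^ (γ₁ - 1)) ^ (2*ℓ) := by
    rw [e0, hsum_split]
    linarith
  -- final bound on the real number
  have hfinal : ∫ ω, ((1 + v * ζ ω) ^ ℓ + 2 * (v * ζ ω) ^ (2*ℓ)) ∂P ≤
      Real.exp (C' * (v ^ 2 * (ℓ:ℝ) ^ 2 + m ^ γ' * (ℓ:ℝ) ^ γ')) := by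
    have hγ₁0 : 0 ≤ γ₁ := by linarith
    have hγ₁1 : γ₁ < 1 := by linarith
    rcases le_or_gt w (1/2) with hcase | hcase
    · -- small w : geometric bound
      have hb_le : ∀ k : ℕ, 1 ≤ k → (w * (k:ℝ) ^ (γ₁ - 1)) ^ k ≤ w ^ k := by
        intro k hk
        apply pow_le_pow_left₀ (by positivity)
        have h5 : (k:ℝ) ^ (γ₁ - 1) ≤ 1 :=
          Real.rpow_le_one_of_one_le_of_nonpos (by exact_mod_cast hk) (by linarith)
        exact mul_le_of_le_one_right hw0 h5
      have hS : ∑ k ∈ Finset.Ico 2 (ℓ+1), (w * (k:ℝ) ^ (γ₁ - 1)) ^ k ≤ 2 * w ^ 2 := by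
        calc ∑ k ∈ Finset.Ico 2 (ℓ+1), (w * (k:ℝ) ^ (γ₁ - 1)) ^ k
            ≤ ∑ k ∈ Finset.Ico 2 (ℓ+1), w ^ k :=
              Finset.sum_le_sum fun k hkm => hb_le k (by
                have := (Finset.mem_Ico.1 hkm).1; omega)
          _ ≤ 2 * w ^ 2 := aux_geom hw0 hcase _
      have hL : (w * ((2*ℓ:ℕ):ℝ) ^ (γ₁ - 1)) ^ (2*ℓ) ≤ w ^ 2 := by
        calc (w * ((2*ℓ:ℕ):ℝ) ^ (γ₁ - 1)) ^ (2*ℓ) ≤ w ^ (2*ℓ) := hb_le _ (by omega)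
          _ ≤ w ^ 2 := pow_le_pow_of_le_one hw0 (by linarith) (by omega)
      have htot : ∫ ω, ((1 + v * ζ ω) ^ ℓ + 2 * (v * ζ ω) ^ (2*ℓ)) ∂P ≤ 1 + 4 * w ^ 2 := by
        linarith
      have hexp : 1 + 4 * w ^ 2 ≤ Real.exp (4 * w ^ 2) := by
        linarith [Real.add_one_le_exp (4 * w ^ 2)]
      have harg : 4 * w ^ 2 ≤ C' * (v ^ 2 * (ℓ:ℝ) ^ 2 + m ^ γ' * (ℓ:ℝ) ^ γ') := by
        have hm2 : m ^ 2 = v ^ 2 := by rw [hm, sq_abs]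
        have hww : w ^ 2 = A ^ 2 * (v ^ 2 * (ℓ:ℝ) ^ 2) := by
          rw [hw, mul_pow, mul_pow, hm2]; ring
        have hvl2 : (0:ℝ) ≤ v ^ 2 * (ℓ:ℝ) ^ 2 := by positivity
        have hC'0 : (0:ℝ) ≤ C' := by rw [hC']; positivity
        have hCge : 4 * A ^ 2 ≤ C' := by
          rw [hC']
          have hsq : A ^ 2 ≤ (A+1) ^ 2 := pow_le_pow_left₀ hA0.le (by linarith) 2
          linarith [pow_nonneg (show (0:ℝ) ≤ A + 1 by linarith) 3]
        calc 4 * w ^ 2 = (4 * A ^ 2) * (v ^ 2 * (ℓ:ℝ) ^ 2) := by rw [hww]; ring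
          _ ≤ C' * (v ^ 2 * (ℓ:ℝ) ^ 2) := mul_le_mul_of_nonneg_right hCge hvl2
          _ ≤ C' * (v ^ 2 * (ℓ:ℝ) ^ 2 + m ^ γ' * (ℓ:ℝ) ^ γ') := by
              apply mul_le_mul_of_nonneg_left _ hC'0
              linarith [hX0]
      calc ∫ ω, ((1 + v * ζ ω) ^ ℓ + 2 * (v * ζ ω) ^ (2*ℓ)) ∂P ≤ 1 + 4 * w ^ 2 := htot
        _ ≤ Real.exp (4 * w ^ 2) := hexp
        _ ≤ Real.exp (C' * (v ^ 2 * (ℓ:ℝ) ^ 2 + m ^ γ' * (ℓ:ℝ) ^ γ')) := by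
            exact Real.exp_le_exp.2 harg
    · -- large w
      set U : ℝ := (2*w) ^ γ' with hU
      have hU1 : 1 ≤ U := Real.one_le_rpow (by linarith) hγ'0.le
      have hbk : ∀ k : ℕ, 1 ≤ k →
          (w * (k:ℝ) ^ (γ₁ - 1)) ^ k ≤ Real.exp (2 * U) * (1/2:ℝ) ^ k := by
        intro k hk
        have := aux_bk hγ₁0 hγ₁1 w hw0 k hk
        rw [hγ'def] at hU
        rw [hU]
        exact this
      have hS : ∑ k ∈ Finset.Ico 2 (ℓ+1), (w * (k:ℝ) ^ (γ₁ - 1)) ^ k ≤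
          Real.exp (2 * U) * (1/2) := by
        calc ∑ k ∈ Finset.Ico 2 (ℓ+1), (w * (k:ℝ) ^ (γ₁ - 1)) ^ k
            ≤ ∑ k ∈ Finset.Ico 2 (ℓ+1), Real.exp (2 * U) * (1/2:ℝ) ^ k :=
              Finset.sum_le_sum fun k hkm => hbk k (by
                have := (Finset.mem_Ico.1 hkm).1; omega)
          _ = Real.exp (2 * U) * ∑ k ∈ Finset.Ico 2 (ℓ+1), (1/2:ℝ) ^ k := by
              rw [Finset.mul_sum]
          _ ≤ Real.exp (2 * U) * (2 * (1/2:ℝ)^2) := by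
              apply mul_le_mul_of_nonneg_left (aux_geom (by norm_num) (by norm_num) _)
                (Real.exp_pos _).le
          _ = Real.exp (2 * U) * (1/2) := by norm_num
      have hL : 2 * (w * ((2*ℓ:ℕ):ℝ) ^ (γ₁ - 1)) ^ (2*ℓ) ≤ Real.exp (2 * U) * (1/2) := by
        have h1 := hbk (2*ℓ) (by omega)
        have h2 : ((1:ℝ)/2) ^ (2*ℓ) ≤ (1/2:ℝ)^2 :=
          pow_le_pow_of_le_one (by norm_num) (by norm_num) (by omega)
        have h3 : (0:ℝ) < Real.exp (2*U) := Real.exp_pos _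
        calc 2 * (w * ((2*ℓ:ℕ):ℝ) ^ (γ₁ - 1)) ^ (2*ℓ)
            ≤ 2 * (Real.exp (2 * U) * (1/2:ℝ) ^ (2*ℓ)) := by linarith
          _ ≤ 2 * (Real.exp (2 * U) * (1/2:ℝ) ^ 2) := by
              apply mul_le_mul_of_nonneg_left
                (mul_le_mul_of_nonneg_left h2 h3.le) (by norm_num)
          _ ≤ Real.exp (2 * U) * (1/2) := le_of_eq (by ring)
      have htot : ∫ ω, ((1 + v * ζ ω) ^ ℓ + 2 * (v * ζ ω) ^ (2*ℓ)) ∂P ≤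
          1 + Real.exp (2 * U) := by
        linarith
      have h2U : (2:ℝ) ≤ 2 * U := by linarith
      have hone : (1:ℝ) ≤ Real.exp (2 * U) := Real.one_le_exp (by linarith)
      have h2le : (2:ℝ) ≤ Real.exp (2 * U) := by
        have := Real.add_one_le_exp (2*U)
        linarith
      have htot2 : ∫ ω, ((1 + v * ζ ω) ^ ℓ + 2 * (v * ζ ω) ^ (2*ℓ)) ∂P ≤
          Real.exp (4 * U) := by
        have hEE : Real.exp (4 * U) = Real.exp (2*U) * Real.exp (2*U) := by
          rw [← Real.exp_add]; ring_nf
        have hprod : 2 * Real.exp (2*U) ≤ Real.exp (2*U) * Real.exp (2*U) := by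
          apply mul_le_mul_of_nonneg_right h2le (Real.exp_pos _).le
        rw [hEE]
        linarith
      have harg : 4 * U ≤ C' * (v ^ 2 * (ℓ:ℝ) ^ 2 + m ^ γ' * (ℓ:ℝ) ^ γ') := by
        have h1 : U = (2:ℝ) ^ γ' * w ^ γ' := by
          rw [hU, Real.mul_rpow (by norm_num) hw0]
        have h2 : (2:ℝ) ^ γ' ≤ 8 := by
          calc (2:ℝ) ^ γ' ≤ (2:ℝ) ^ (3:ℝ) :=
                Real.rpow_le_rpow_of_exponent_le (by norm_num) hγ'3.le
            _ = 8 := by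
                rw [show (3:ℝ) = ((3:ℕ):ℝ) by norm_num, Real.rpow_natCast]; norm_num
        have h3 : w ^ γ' = A ^ γ' * (m ^ γ' * (ℓ:ℝ) ^ γ') := by
          rw [hw, Real.mul_rpow (by positivity) (by positivity),
            Real.mul_rpow hA0.le hm0]
          ring
        have h4 : (0:ℝ) ≤ w ^ γ' := Real.rpow_nonneg hw0 _
        have hA3 : A ^ γ' ≤ (A+1)^3 := by
          calc A ^ γ' ≤ (A+1) ^ γ' :=
                Real.rpow_le_rpow hA0.le (by linarith) hγ'0.le
            _ ≤ (A+1) ^ (3:ℝ) :=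
                Real.rpow_le_rpow_of_exponent_le (by linarith) hγ'3.le
            _ = (A+1) ^ (3:ℕ) := by
                rw [show (3:ℝ) = ((3:ℕ):ℝ) by norm_num, Real.rpow_natCast]
        have hCge : 32 * (A+1)^3 ≤ C' := by
          rw [hC']
          linarith [pow_nonneg (show (0:ℝ) ≤ A+1 by linarith) 3,
            pow_nonneg (show (0:ℝ) ≤ A+1 by linarith) 2]
        have hC'0 : (0:ℝ) ≤ C' := by rw [hC']; positivity
        calc 4 * U = 4 * ((2:ℝ) ^ γ' * w ^ γ') := by rw [h1]
          _ ≤ 4 * (8 * w ^ γ') := by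
              apply mul_le_mul_of_nonneg_left
                (mul_le_mul_of_nonneg_right h2 h4) (by norm_num)
          _ = 32 * (A ^ γ' * (m ^ γ' * (ℓ:ℝ) ^ γ')) := by rw [h3]; ring
          _ ≤ 32 * ((A+1)^3 * (m ^ γ' * (ℓ:ℝ) ^ γ')) := by
              apply mul_le_mul_of_nonneg_left
                (mul_le_mul_of_nonneg_right hA3 hX0) (by norm_num)
          _ = (32 * (A+1)^3) * (m ^ γ' * (ℓ:ℝ) ^ γ') := by ring
          _ ≤ C' * (m ^ γ' * (ℓ:ℝ) ^ γ') := mul_le_mul_of_nonneg_right hCge hX0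
          _ ≤ C' * (v ^ 2 * (ℓ:ℝ) ^ 2 + m ^ γ' * (ℓ:ℝ) ^ γ') := by
              apply mul_le_mul_of_nonneg_left _ hC'0
              have hvl2 : (0:ℝ) ≤ v ^ 2 * (ℓ:ℝ) ^ 2 := by positivity
              linarith
      calc ∫ ω, ((1 + v * ζ ω) ^ ℓ + 2 * (v * ζ ω) ^ (2*ℓ)) ∂P ≤ Real.exp (4 * U) := htot2
        _ ≤ Real.exp (C' * (v ^ 2 * (ℓ:ℝ) ^ 2 + m ^ γ' * (ℓ:ℝ) ^ γ')) :=
            Real.exp_le_exp.2 harg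
  -- conclude
  calc ∫⁻ ω, ENNReal.ofReal (|1 + v * ζ ω| ^ ℓ) ∂P
      ≤ ∫⁻ ω, ENNReal.ofReal ((1 + v * ζ ω) ^ ℓ + 2 * (v * ζ ω) ^ (2*ℓ)) ∂P :=
        lintegral_mono fun ω => ENNReal.ofReal_le_ofReal (hgpt ω)
    _ = ENNReal.ofReal (∫ ω, ((1 + v * ζ ω) ^ ℓ + 2 * (v * ζ ω) ^ (2*ℓ)) ∂P) :=
        (ofReal_integral_eq_lintegral_ofReal hIg (Filter.Eventually.of_forall hgnn)).symm
    _ ≤ ENNReal.ofReal (Real.exp (C' * (v ^ 2 * (ℓ:ℝ) ^ 2 + |v| ^ γ' * (ℓ:ℝ) ^ γ'))) :=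
        ENNReal.ofReal_le_ofReal (by rw [← hm]; exact hfinal)
end

section
/- For every k ∈ ℕ, the k-th moment of the semicircle distribution with density (1/(2π))√(4−x²) on (−2,2) equals (1/(k/2+1))·C(k, k/2) if k is even, and 0 if k is odd. -/
/-!
Substituting `x = 2 sin θ` turns `√(4 - x²) dx` into `4 cos² θ dθ`, so the `k`-th moment is
`2^(k+1) / (π (k+2))` times `J k = ∫_{-π/2}^{π/2} sin^k θ dθ` (`sinPowIntegral k`).
The Wallis recurrence `(n+2) J (n+2) = (n+1) J n`, with `J 0 = π` and `J 1 = 0`, makes `J`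
vanish at odd `k` and gives `J (2m) = π C(2m, m) / 4^m`, which is exactly what the Catalan
numbers `C(2m, m) / (m+1)` need.
-/

open MeasureTheory

/-- The semicircle distribution: the measure on `ℝ` with density
`(1/(2π)) √(4 - x²)` on `(-2, 2)`. -/
noncomputable def semicircle : Measure ℝ :=
  volume.withDensity fun x =>
    ENNReal.ofReal
      ((Set.Ioo (-2 : ℝ) 2).indicator
        (fun x => 1 / (2 * Real.pi) * Real.sqrt (4 - x ^ 2)) x)

open Real Set

noncomputable def sinPowIntegral (n : ℕ) : ℝ := ∫ θ in -(π / 2)..π / 2, sin θ ^ n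

theorem sinPowIntegral_add_two (n : ℕ) :
    sinPowIntegral (n + 2) = (n + 1) / (n + 2) * sinPowIntegral n := by
  simpa [sinPowIntegral] using integral_sin_pow (a := -(π / 2)) (b := π / 2) n

theorem sinPowIntegral_two_mul_add_one (m : ℕ) : sinPowIntegral (2 * m + 1) = 0 := by
  induction m with
  | zero => simp [sinPowIntegral]
  | succ m ih =>
    rw [show 2 * (m + 1) + 1 = 2 * m + 1 + 2 by ring, sinPowIntegral_add_two, ih, mul_zero]

theorem sinPowIntegral_two_mul (m : ℕ) :
    sinPowIntegral (2 * m) = π * m.centralBinom / 4 ^ m := by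
  induction m with
  | zero => simp [sinPowIntegral]
  | succ m ih =>
    have hbinom :
        ((m + 1 : ℕ) : ℝ) * (m + 1).centralBinom = 2 * (2 * m + 1) * m.centralBinom := by
      exact_mod_cast m.succ_mul_centralBinom_succ
    rw [show 2 * (m + 1) = 2 * m + 2 by ring, sinPowIntegral_add_two, ih]
    push_cast at hbinom ⊢
    rw [pow_succ]
    field_simp
    linear_combination -2 * hbinom

theorem integral_semicircle (g : ℝ → ℝ) :
    ∫ x, g x ∂semicircle = (2 * π)⁻¹ * ∫ x in (-2)..2, √(4 - x ^ 2) * g x := by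
  have hdens : ∀ x, (ENNReal.ofReal ((Ioo (-2 : ℝ) 2).indicator
      (fun x => 1 / (2 * π) * √(4 - x ^ 2)) x)).toReal • g x =
      (Ioo (-2 : ℝ) 2).indicator (fun x => (2 * π)⁻¹ * (√(4 - x ^ 2) * g x)) x := by
    intro x
    by_cases hx : x ∈ Ioo (-2 : ℝ) 2
    · simp only [indicator_of_mem hx, smul_eq_mul]
      rw [ENNReal.toReal_ofReal (by positivity)]
      ring
    · simp [indicator_of_notMem hx]
  rw [semicircle, integral_withDensity_eq_integral_toReal_smul
      ((Measurable.indicator (by fun_prop) measurableSet_Ioo).ennreal_ofReal)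
      (ae_of_all _ fun _ => ENNReal.ofReal_lt_top)]
  simp_rw [hdens]
  rw [integral_indicator measurableSet_Ioo, ← integral_Ioc_eq_integral_Ioo,
    ← intervalIntegral.integral_of_le (by norm_num), intervalIntegral.integral_const_mul]

theorem integral_sqrt_four_sub_sq_mul {g : ℝ → ℝ} (hg : Continuous g) :
    ∫ x in (-2)..2, √(4 - x ^ 2) * g x =
      ∫ θ in -(π / 2)..π / 2, 4 * cos θ ^ 2 * g (2 * sin θ) := by
  have hsub := intervalIntegral.integral_comp_mul_deriv (a := -(π / 2)) (b := π / 2)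
    (f := fun θ => 2 * sin θ) (f' := fun θ => 2 * cos θ) (g := fun x => √(4 - x ^ 2) * g x)
    (fun θ _ => (hasDerivAt_sin θ).const_mul 2) (by fun_prop) (by fun_prop)
  simp only [sin_neg, sin_pi_div_two] at hsub
  norm_num at hsub
  rw [← hsub]
  refine intervalIntegral.integral_congr fun θ hθ => ?_
  rw [uIcc_of_le (by linarith [pi_pos])] at hθ
  have hcos : 0 ≤ cos θ := cos_nonneg_of_mem_Icc hθ
  have hsq : 4 - (2 * sin θ) ^ 2 = (2 * cos θ) ^ 2 := by nlinarith [sin_sq_add_cos_sq θ]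
  simp only [hsq, sqrt_sq (by positivity : 0 ≤ 2 * cos θ)]
  ring

theorem integral_sqrt_four_sub_sq_mul_pow (k : ℕ) :
    ∫ x in (-2)..2, √(4 - x ^ 2) * x ^ k = 2 ^ (k + 2) / (k + 2) * sinPowIntegral k := by
  have hpyth (θ : ℝ) :
      4 * cos θ ^ 2 * (2 * sin θ) ^ k = 2 ^ (k + 2) * (sin θ ^ k - sin θ ^ (k + 2)) := by
    linear_combination (2 ^ (k + 2) * sin θ ^ k) * cos_sq_add_sin_sq θ
  have hint (n : ℕ) : IntervalIntegrable (fun θ => sin θ ^ n) volume (-(π / 2)) (π / 2) :=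
    (continuous_sin.pow n).intervalIntegrable _ _
  rw [integral_sqrt_four_sub_sq_mul (by fun_prop)]
  simp_rw [hpyth]
  rw [intervalIntegral.integral_const_mul, intervalIntegral.integral_sub (hint k) (hint (k + 2))]
  change 2 ^ (k + 2) * (sinPowIntegral k - sinPowIntegral (k + 2)) = _
  rw [sinPowIntegral_add_two]
  field_simp
  ring

/-- The `k`-th moment of the semicircle distribution is the Catalan-type number
`(1/(k/2+1)) · C(k, k/2)` for even `k`, and `0` for odd `k`. -/
theorem semicircle_moment (k : ℕ) :
    ∫ x, x ^ k ∂semicircle =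
      if Even k then (1 / ((k / 2 : ℕ) + 1 : ℝ)) * (k.choose (k / 2) : ℝ) else 0 := by
  rw [integral_semicircle, integral_sqrt_four_sub_sq_mul_pow]
  rcases Nat.even_or_odd' k with ⟨m, rfl | rfl⟩
  · rw [if_pos (even_two_mul m), Nat.mul_div_cancel_left m two_pos,
      ← Nat.centralBinom_eq_two_mul_choose, sinPowIntegral_two_mul]
    push_cast
    field_simp
    rw [pow_add, pow_mul]
    ring
  · rw [if_neg (Nat.not_even_two_mul_add_one m), sinPowIntegral_two_mul_add_one, mul_zero,
      mul_zero]
end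

section
/- Let f₁ and f₂ be measurable functions on [0,T] possessing local times L_h(f₁), L_h(f₂). Then for every ε > 0, sup over h ∈ ℝ of |L_h(f₁) − L_h(f₂)| is at most (T/ε²)·sup over t ∈ [0,T] of |f₁(t) − f₂(t)| plus the sum over i ∈ {1,2} of sup over h₁, h₂ with |h₁ − h₂| ≤ ε of |L_{h₁}(f_i) − L_{h₂}(f_i)|. -/
/-!
Test both occupation densities against the tent `φ a = max (ε - |a - h|) 0`, which has mass `ε²`
and is supported in `[h - ε, h + ε]`. By the occupation formula `∫₀ᵀ φ (fᵢ t) dt = ∫ φ Lᵢ`,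
which is within `ε² Mᵢ` of `ε² Lᵢ h`. Since `φ` is `1`-Lipschitz, the left-hand
sides for `f₁` and `f₂` differ by at most `T D`; dividing by `ε²` gives the bound.
-/

open MeasureTheory

/-- `L` is the occupation density (local time profile) of `f` on the time interval
`[0, T]`: for every Borel set `A`, `∫_A L(a) da = Leb {t ∈ [0,T] : f t ∈ A}`. -/
def IsOccupationDensity (T : ℝ) (f : ℝ → ℝ) (L : ℝ → ℝ) : Prop :=
  ∀ A : Set ℝ, MeasurableSet A →
    ∫ a in A, L a = (volume {t ∈ Set.Icc (0 : ℝ) T | f t ∈ A}).toReal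

open Set

namespace IsOccupationDensity

variable {T : ℝ} {f L : ℝ → ℝ}

theorem integrable (hT : 0 < T) (hL : IsOccupationDensity T f L) : Integrable L := by
  by_contra hL_int
  have h_univ := hL univ MeasurableSet.univ
  simp only [Measure.restrict_univ, integral_undef hL_int, mem_univ, sep_true, Real.volume_Icc,
    sub_zero, ENNReal.toReal_ofReal hT.le] at h_univ
  exact hT.ne h_univ

theorem ae_nonneg (hT : 0 < T) (hL : IsOccupationDensity T f L) : 0 ≤ᵐ[volume] L :=
  ae_nonneg_of_forall_setIntegral_nonneg (hL.integrable hT) fun A hA _ ↦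
    (hL A hA).symm ▸ ENNReal.toReal_nonneg

theorem map_eq_withDensity (hT : 0 < T) (hf : Measurable f) (hL : IsOccupationDensity T f L) :
    (volume.restrict (Icc 0 T)).map f = volume.withDensity (fun a ↦ ENNReal.ofReal (L a)) := by
  ext A hA
  have h_fin : volume {t ∈ Icc (0 : ℝ) T | f t ∈ A} ≠ ⊤ :=
    measure_ne_top_of_subset (sep_subset _ _) measure_Icc_lt_top.ne
  rw [Measure.map_apply hf hA, Measure.restrict_apply (hf hA), withDensity_apply _ hA,
    ← ofReal_integral_eq_lintegral_ofReal (hL.integrable hT).integrableOn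
      (ae_restrict_of_ae (hL.ae_nonneg hT)), hL A hA, ENNReal.ofReal_toReal h_fin, inter_comm]
  rfl

theorem setIntegral_comp_eq_integral_mul (hT : 0 < T) (hf : Measurable f)
    (hL : IsOccupationDensity T f L) {g : ℝ → ℝ} (hg : Measurable g) :
    ∫ t in Icc 0 T, g (f t) = ∫ a, L a * g a := by
  rw [← integral_map hf.aemeasurable hg.aestronglyMeasurable, hL.map_eq_withDensity hT hf,
    integral_withDensity_eq_integral_toReal_smul₀
      (hL.integrable hT).aemeasurable.ennreal_ofReal (ae_of_all _ fun _ ↦ ENNReal.ofReal_lt_top)]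
  refine integral_congr_ae ((hL.ae_nonneg hT).mono fun a ha ↦ ?_)
  simp [ENNReal.toReal_ofReal ha]

end IsOccupationDensity

def tent (h ε a : ℝ) : ℝ := max (ε - |a - h|) 0

namespace tent

theorem nonneg (h ε a : ℝ) : 0 ≤ tent h ε a := le_max_right _ _

theorem norm_le (h ε a : ℝ) : ‖tent h ε a‖ ≤ max ε 0 := by
  rw [Real.norm_of_nonneg (nonneg h ε a)]
  exact max_le_max_right 0 (by linarith [abs_nonneg (a - h)])

theorem eq_zero_of_le_abs_sub {h ε a : ℝ} (ha : ε ≤ |a - h|) : tent h ε a = 0 :=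
  max_eq_right (by linarith)

theorem continuous (h ε : ℝ) : Continuous (tent h ε) := by
  unfold tent
  fun_prop

theorem abs_sub_le (h ε a b : ℝ) : |tent h ε a - tent h ε b| ≤ |a - b| :=
  calc |max (ε - |a - h|) 0 - max (ε - |b - h|) 0| ≤ |(ε - |a - h|) - (ε - |b - h|)| :=
        abs_max_sub_max_le_abs _ _ _
    _ = abs (|b - h| - |a - h|) := by ring_nf
    _ ≤ |(b - h) - (a - h)| := abs_abs_sub_abs_le_abs_sub _ _
    _ = |a - b| := by rw [abs_sub_comm]; ring_nf

theorem integrable (h ε : ℝ) : Integrable (tent h ε) :=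
  (tent.continuous h ε).integrable_of_hasCompactSupport <|
    HasCompactSupport.intro (isCompact_closedBall h ε) fun a ha ↦
      eq_zero_of_le_abs_sub (by rw [← Real.dist_eq]; exact (not_le.1 ha).le)

theorem integral (h : ℝ) {ε : ℝ} (hε : 0 ≤ ε) : ∫ a, tent h ε a = ε ^ 2 :=
  calc ∫ a, tent h ε a = ∫ a, max (ε - |a|) 0 :=
        integral_sub_right_eq_self (fun a ↦ max (ε - |a|) 0) h
    _ = 2 * ∫ a in Ioi 0, max (ε - a) 0 := integral_comp_abs (f := fun a ↦ max (ε - a) 0)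
    _ = 2 * ∫ a in Ioc 0 ε, (ε - a) := by
      congr 1
      rw [setIntegral_eq_of_subset_of_forall_sdiff_eq_zero measurableSet_Ioi Ioc_subset_Ioi_self]
      · exact setIntegral_congr_fun measurableSet_Ioc fun a ha ↦ max_eq_left (by linarith [ha.2])
      · intro a ha
        exact max_eq_right (by linarith [not_le.1 fun h' ↦ ha.2 ⟨ha.1, h'⟩])
    _ = ε ^ 2 := by
      rw [← intervalIntegral.integral_of_le hε, intervalIntegral.integral_sub (by simp) (by simp),
        integral_id]
      simp only [intervalIntegral.integral_const, sub_zero, smul_eq_mul, ne_eq,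
        OfNat.ofNat_ne_zero, not_false_eq_true, zero_pow]
      ring

end tent

theorem abs_integral_mul_tent_sub_le {L : ℝ → ℝ} (hL : Integrable L) {h ε M : ℝ} (hε : 0 ≤ ε)
    (hM : ∀ a, |a - h| ≤ ε → |L a - L h| ≤ M) :
    |(∫ a, L a * tent h ε a) - ε ^ 2 * L h| ≤ ε ^ 2 * M := by
  have hL_tent : Integrable (fun a ↦ L a * tent h ε a) :=
    hL.mul_bdd (tent.continuous h ε).aestronglyMeasurable (ae_of_all _ (tent.norm_le h ε))
  have h_diff : ∫ a, (L a - L h) * tent h ε a = (∫ a, L a * tent h ε a) - ε ^ 2 * L h := by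
    simp only [sub_mul]
    rw [integral_sub hL_tent ((tent.integrable h ε).const_mul _), integral_const_mul,
      tent.integral h hε, mul_comm]
  have h_bound : ∀ a, ‖(L a - L h) * tent h ε a‖ ≤ M * tent h ε a := fun a ↦ by
    rw [Real.norm_eq_abs, abs_mul, abs_of_nonneg (tent.nonneg h ε a)]
    rcases le_or_gt |a - h| ε with ha | ha
    · exact mul_le_mul_of_nonneg_right (hM a ha) (tent.nonneg h ε a)
    · simp [tent.eq_zero_of_le_abs_sub ha.le]
  calc |(∫ a, L a * tent h ε a) - ε ^ 2 * L h| = ‖∫ a, (L a - L h) * tent h ε a‖ := by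
        rw [h_diff, Real.norm_eq_abs]
    _ ≤ ∫ a, M * tent h ε a :=
        norm_integral_le_of_norm_le ((tent.integrable h ε).const_mul M) (ae_of_all _ h_bound)
    _ = ε ^ 2 * M := by rw [integral_const_mul, tent.integral h hε, mul_comm]

theorem abs_setIntegral_tent_comp_sub_le {T D : ℝ} (hT : 0 ≤ T) {f₁ f₂ : ℝ → ℝ}
    (hf₁ : Measurable f₁) (hf₂ : Measurable f₂) (hD : ∀ t ∈ Icc 0 T, |f₁ t - f₂ t| ≤ D)
    (h ε : ℝ) :
    |(∫ t in Icc 0 T, tent h ε (f₁ t)) - ∫ t in Icc 0 T, tent h ε (f₂ t)| ≤ T * D := by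
  have h_int : ∀ f : ℝ → ℝ, Measurable f → IntegrableOn (fun t ↦ tent h ε (f t)) (Icc 0 T) :=
    fun f hf ↦ .of_bound measure_Icc_lt_top
      ((tent.continuous h ε).measurable.comp hf).aestronglyMeasurable _
      (ae_of_all _ fun t ↦ tent.norm_le h ε (f t))
  calc |(∫ t in Icc 0 T, tent h ε (f₁ t)) - ∫ t in Icc 0 T, tent h ε (f₂ t)|
      = ‖∫ t in Icc 0 T, (tent h ε (f₁ t) - tent h ε (f₂ t))‖ := by
        rw [integral_sub (h_int f₁ hf₁) (h_int f₂ hf₂), Real.norm_eq_abs]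
    _ ≤ D * volume.real (Icc 0 T) := norm_setIntegral_le_of_norm_le_const measure_Icc_lt_top
        fun t ht ↦ (tent.abs_sub_le h ε _ _).trans (hD t ht)
    _ = T * D := by rw [Real.volume_real_Icc_of_le hT, sub_zero, mul_comm]

/-- Comparison of local times of two functions: if `f₁, f₂` are measurable on `[0,T]`
with local times `L₁, L₂`, then for every `ε > 0` and every level `h`,
`|L₁(h) - L₂(h)| ≤ (T/ε²) · sup_{[0,T]} |f₁ - f₂| + Σᵢ sup_{|h₁-h₂|≤ε} |Lᵢ(h₁) - Lᵢ(h₂)|`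
(with the suprema replaced by arbitrary upper bounds `D`, `M₁`, `M₂`). -/
theorem local_time_sup_comparison (T : ℝ) (hT : 0 < T) (f₁ f₂ L₁ L₂ : ℝ → ℝ)
    (hf₁ : Measurable f₁) (hf₂ : Measurable f₂)
    (hL₁ : IsOccupationDensity T f₁ L₁) (hL₂ : IsOccupationDensity T f₂ L₂)
    (ε : ℝ) (hε : 0 < ε) (D M₁ M₂ : ℝ)
    (hD : ∀ t ∈ Set.Icc (0 : ℝ) T, |f₁ t - f₂ t| ≤ D)
    (hM₁ : ∀ h₁ h₂ : ℝ, |h₁ - h₂| ≤ ε → |L₁ h₁ - L₁ h₂| ≤ M₁)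
    (hM₂ : ∀ h₁ h₂ : ℝ, |h₁ - h₂| ≤ ε → |L₂ h₁ - L₂ h₂| ≤ M₂) :
    ∀ h : ℝ, |L₁ h - L₂ h| ≤ T / ε ^ 2 * D + (M₁ + M₂) := by
  intro h
  have h₁ := abs_integral_mul_tent_sub_le (hL₁.integrable hT) hε.le fun a ha ↦ hM₁ a h ha
  have h₂ := abs_integral_mul_tent_sub_le (hL₂.integrable hT) hε.le fun a ha ↦ hM₂ a h ha
  have h_cmp := abs_setIntegral_tent_comp_sub_le hT.le hf₁ hf₂ hD h ε
  rw [hL₁.setIntegral_comp_eq_integral_mul hT hf₁ (tent.continuous h ε).measurable,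
    hL₂.setIntegral_comp_eq_integral_mul hT hf₂ (tent.continuous h ε).measurable] at h_cmp
  have hε2 : 0 < ε ^ 2 := by positivity
  have h_scaled : |ε ^ 2 * (L₁ h - L₂ h)| ≤ T * D + ε ^ 2 * (M₁ + M₂) := by
    rw [abs_le] at h₁ h₂ h_cmp ⊢
    constructor <;> linarith
  rw [abs_mul, abs_of_pos hε2] at h_scaled
  calc |L₁ h - L₂ h| = ε ^ 2 * |L₁ h - L₂ h| / ε ^ 2 := by field_simp
    _ ≤ (T * D + ε ^ 2 * (M₁ + M₂)) / ε ^ 2 := by gcongr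
    _ = T / ε ^ 2 * D + (M₁ + M₂) := by field_simp
end

section
/- Fix k ∈ ℕ, N ∈ ℕ, and constants c₀, c ≥ 0. Then for every l with 1 ≤ l ≤ k, the coefficient of z^l in exp(Σ_{j'=2}^∞ (k/j') z^{j'}) is at most C^l · (k·log l / l)^{⌊l/2⌋} for a universal constant C > 0. -/
/-!
Write `f = Σ_{j ≥ 2} (k/j) z^j` and `h = ⌊l/2⌋`. Since `z² ∣ f`, `[z^l] f^m = 0` unless `m ≤ h`,
and for `m ≤ h` nonnegativity of the coefficients gives
`[z^l] f^m ≤ (Σ_{j ≤ l} [z^j] f)^m ≤ (k log l)^m = x^m`.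
As `h ≤ l log 2 ≤ x`, `x^m ≤ (x/h)^h h^m`, so the whole sum is at most
`(x/h)^h Σ_m h^m/m! ≤ (x/h)^h e^h = (e x/h)^h ≤ (9 x/l)^h`.
-/

open PowerSeries Finset

namespace PowerSeries

theorem coeff_pow_eq_zero_of_X_pow_dvd {R : Type*} [CommSemiring R] {f : R⟦X⟧} {d n m : ℕ}
    (hf : X ^ d ∣ f) (hn : n < d * m) : coeff n (f ^ m) = 0 :=
  X_pow_dvd_iff.1 (pow_mul (X : R⟦X⟧) d m ▸ pow_dvd_pow_of_dvd hf m) n hn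

theorem coeff_pow_le_sum_range_coeff_pow {R : Type*} [CommSemiring R] [PartialOrder R]
    [IsOrderedRing R] {f : R⟦X⟧} (hf : ∀ n, 0 ≤ coeff n f) {a n : ℕ} (han : a ≤ n) (m : ℕ) :
    coeff a (f ^ m) ≤ (∑ i ∈ range (n + 1), coeff i f) ^ m := by
  induction m generalizing a with
  | zero =>
    rw [pow_zero, pow_zero, coeff_one]
    split_ifs
    exacts [le_rfl, zero_le_one]
  | succ m ih =>
    set S := ∑ i ∈ range (n + 1), coeff i f
    calc coeff a (f ^ (m + 1))
        = ∑ p ∈ antidiagonal a, coeff p.1 f * coeff p.2 (f ^ m) := by rw [pow_succ', coeff_mul]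
      _ ≤ ∑ p ∈ antidiagonal a, coeff p.1 f * S ^ m := by
        gcongr with p hp
        · exact hf _
        · exact ih ((Finset.HasAntidiagonal.antidiagonal.snd_le hp).trans han)
      _ = (∑ i ∈ range (a + 1), coeff i f) * S ^ m := by
        rw [← sum_mul, Nat.sum_antidiagonal_eq_sum_range_succ (fun i _ => coeff i f)]
      _ ≤ S * S ^ m := by
        gcongr
        · exact pow_nonneg (sum_nonneg fun i _ => hf i) m
        · exact sum_le_sum_of_subset_of_nonneg (range_subset_range.2 (by omega)) fun i _ _ => hf i
      _ = S ^ (m + 1) := (pow_succ' S m).symm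

end PowerSeries

noncomputable def higherPowerSumSeries (k : ℝ) : ℝ⟦X⟧ :=
  PowerSeries.mk fun j => if 2 ≤ j then k / j else 0

namespace higherPowerSumSeries

theorem coeff_nonneg {k : ℝ} (hk : 0 ≤ k) (n : ℕ) : 0 ≤ coeff n (higherPowerSumSeries k) := by
  rw [higherPowerSumSeries, coeff_mk]
  split_ifs
  exacts [by positivity, le_rfl]

theorem X_sq_dvd (k : ℝ) : X ^ 2 ∣ higherPowerSumSeries k := by
  refine X_pow_dvd_iff.2 fun n hn => ?_
  rw [higherPowerSumSeries, coeff_mk, if_neg (by omega)]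

theorem sum_range_coeff_eq_mul_harmonic (k : ℝ) {n : ℕ} (hn : 1 ≤ n) :
    ∑ i ∈ range (n + 1), coeff i (higherPowerSumSeries k) = k * ((harmonic n : ℝ) - 1) := by
  induction n, hn using Nat.le_induction with
  | base => simp [higherPowerSumSeries, sum_range_succ]
  | succ n hn ih =>
    rw [sum_range_succ, ih, harmonic_succ, higherPowerSumSeries, coeff_mk, if_pos (by omega)]
    push_cast
    ring

theorem sum_range_coeff_le_mul_log {k : ℝ} (hk : 0 ≤ k) (n : ℕ) :
    ∑ i ∈ range (n + 1), coeff i (higherPowerSumSeries k) ≤ k * Real.log n := by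
  rcases Nat.eq_zero_or_pos n with rfl | hn
  · simp [higherPowerSumSeries]
  rw [sum_range_coeff_eq_mul_harmonic k hn]
  have := harmonic_le_one_add_log n
  gcongr
  linarith

end higherPowerSumSeries

theorem pow_le_div_pow_mul_pow {x : ℝ} {m h : ℕ} (hmh : m ≤ h) (hhx : (h : ℝ) ≤ x) :
    x ^ m ≤ (x / h) ^ h * (h : ℝ) ^ m := by
  rcases Nat.eq_zero_or_pos h with rfl | hh
  · simp [Nat.le_zero.1 hmh]
  have hh' : (0 : ℝ) < h := Nat.cast_pos.2 hh
  calc x ^ m = (x / h) ^ m * (h : ℝ) ^ m := by rw [div_pow, div_mul_cancel₀ _ (by positivity)]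
    _ ≤ (x / h) ^ h * (h : ℝ) ^ m := by
      gcongr
      exact (one_le_div hh').2 hhx

theorem half_le_mul_log {k l : ℕ} (hlk : l ≤ k) : ((l / 2 : ℕ) : ℝ) ≤ k * Real.log l := by
  rcases lt_or_ge l 2 with hl | hl
  · rw [Nat.div_eq_of_lt hl, Nat.cast_zero]
    exact mul_nonneg k.cast_nonneg (Real.log_natCast_nonneg l)
  have hl' : (2 : ℝ) ≤ l := by exact_mod_cast hl
  calc ((l / 2 : ℕ) : ℝ) ≤ l / 2 := Nat.cast_div_le
    _ ≤ l * Real.log 2 := by nlinarith [Real.log_two_gt_d9]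
    _ ≤ k * Real.log l := by gcongr

theorem div_half_pow_mul_exp_le {x : ℝ} (hx : 0 ≤ x) (l : ℕ) :
    (x / (l / 2 : ℕ)) ^ (l / 2) * Real.exp (l / 2 : ℕ) ≤ 9 ^ l * (x / l) ^ (l / 2) := by
  set h := l / 2
  rcases Nat.eq_zero_or_pos h with hh | hh
  · simp [hh, one_le_pow₀]
  have hl3h : (l : ℝ) ≤ 3 * h := by exact_mod_cast (show l ≤ 3 * h by omega)
  have hh' : (0 : ℝ) < h := Nat.cast_pos.2 hh
  have hl : (0 : ℝ) < l := by exact_mod_cast (show 0 < l by omega)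
  calc (x / h) ^ h * Real.exp h = (Real.exp 1 * x / h) ^ h := by
        rw [← Real.exp_one_pow, ← mul_pow, mul_div_assoc, mul_comm]
    _ ≤ (9 * x / l) ^ h := by
      gcongr ?_ ^ _
      rw [div_le_div_iff₀ hh' hl]
      nlinarith [Real.exp_one_lt_d9, mul_nonneg hx hh'.le,
        mul_le_mul_of_nonneg_left hl3h (mul_nonneg (Real.exp_pos 1).le hx)]
    _ = 9 ^ h * (x / l) ^ h := by rw [mul_div_assoc, mul_pow]
    _ ≤ 9 ^ l * (x / l) ^ h := by
      gcongr
      · norm_num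
      · omega

/-- There is a universal constant `C > 0` such that for all `k` and `1 ≤ l ≤ k`, the
coefficient of `z^l` in `exp (Σ_{j'≥2} (k/j') z^{j'})` is at most
`C^l · (k log l / l)^{⌊l/2⌋}`. Since the series in the exponent has zero constant term,
the coefficient of `z^l` of its exponential is `Σ_{m=0}^{l} (1/m!) · [z^l] (Σ_{j'≥2} (k/j') z^{j'})^m`. -/
theorem exp_coeff_higher_power_sums_bound :
    ∃ C : ℝ, 0 < C ∧ ∀ k l : ℕ, 1 ≤ l → l ≤ k →
      (∑ m ∈ Finset.range (l + 1), (1 / (m.factorial : ℝ)) *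
          PowerSeries.coeff (R := ℝ) l
            ((PowerSeries.mk fun j' : ℕ =>
              if 2 ≤ j' then (k : ℝ) / j' else 0) ^ m)) ≤
        C ^ l * ((k : ℝ) * Real.log l / l) ^ (l / 2) := by
  refine ⟨9, by norm_num, fun k l _ hlk => ?_⟩
  set h := l / 2
  set x := (k : ℝ) * Real.log l
  have hhx : (h : ℝ) ≤ x := half_le_mul_log hlk
  have hx : 0 ≤ x := h.cast_nonneg.trans hhx
  have hf := higherPowerSumSeries.coeff_nonneg k.cast_nonneg
  have hcoeff (m : ℕ) : coeff l (higherPowerSumSeries k ^ m) ≤ (x / h) ^ h * (h : ℝ) ^ m := by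
    rcases lt_or_ge l (2 * m) with hlm | hml
    · rw [coeff_pow_eq_zero_of_X_pow_dvd (higherPowerSumSeries.X_sq_dvd k) hlm]
      exact mul_nonneg (pow_nonneg (div_nonneg hx h.cast_nonneg) h) (pow_nonneg h.cast_nonneg m)
    calc coeff l (higherPowerSumSeries k ^ m)
        ≤ (∑ i ∈ range (l + 1), coeff i (higherPowerSumSeries k)) ^ m :=
          coeff_pow_le_sum_range_coeff_pow hf le_rfl m
      _ ≤ x ^ m := by
        gcongr
        · exact sum_nonneg fun i _ => hf i
        · exact higherPowerSumSeries.sum_range_coeff_le_mul_log k.cast_nonneg l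
      _ ≤ (x / h) ^ h * (h : ℝ) ^ m := pow_le_div_pow_mul_pow (by omega) hhx
  calc ∑ m ∈ range (l + 1), 1 / (m.factorial : ℝ) * coeff l (higherPowerSumSeries k ^ m)
      ≤ ∑ m ∈ range (l + 1), 1 / (m.factorial : ℝ) * ((x / h) ^ h * (h : ℝ) ^ m) := by
        gcongr with m
        exact hcoeff m
    _ = (x / h) ^ h * ∑ m ∈ range (l + 1), (h : ℝ) ^ m / m.factorial := by
        rw [mul_sum]
        exact sum_congr rfl fun m _ => by ring
    _ ≤ (x / h) ^ h * Real.exp h := by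
        gcongr
        exact Real.sum_le_exp_of_nonneg h.cast_nonneg _
    _ ≤ 9 ^ l * (x / l) ^ h := div_half_pow_mul_exp_le hx l
end
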